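/- arXiv:2204.11055 — 2 statements merged into one kernel-verified Lean document; each statement's English description precedes it below -/
import Mathlib

section
/- Let θ be a fully invariant congruence on F containing x²y ≈ yx² and x^s ≈ x^{s+1} for some s ∈ ℕ (so the corresponding variety is an aperiodic subvariety of A = var{x²y ≈ yx²}). Let r ∈ ℕ₀, e₀, f₀ ∈ ℕ₀ and e₁, f₁, …, e_r, f_r ∈ {0,1}, and set e = Σ_{i=0}^r e_i and f = Σ_{i=0}^r f_i. If the two words x^{e₀} ∏_{i=1}^r (t_i x^{e_i}) and x^{f₀} ∏_{i=1}^r (t_i x^{f_i}) are distinct, then θ ⊔ ⟨{x^{e₀}∏_{i=1}^r(t_i x^{e_i}) ≈ x^{f₀}∏_{i=1}^r(t_i x^{f_i})}⟩ = θ ⊔ ⟨{x^e ≈ x^f, δ_{e−e₀,e₀}, δ_{f−f₀,f₀}}⟩, where ⊔ is the join in the lattice of fully invariant congruences. -/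
/-! ## Words over a countably infinite alphabet -/

/-- `Word` is the free monoid `F` over the countably infinite alphabet `X = ℕ`. -/
abbrev Word : Type := FreeMonoid ℕ

/-- The letter with index `i`, as a one-letter word. -/
def ltr (i : ℕ) : Word := FreeMonoid.of i

/-- The distinguished letters `x`, `y`, `z`, `t`, `s`. -/
def wx : Word := ltr 0
def wy : Word := ltr 1
def wz : Word := ltr 2
def wt : Word := ltr 3
def ws : Word := ltr 4

/-- The letters `z_i` for `i ≥ 1` (distinct from `x,y,z,t,s` and from all `t_j`). -/
def wzi (i : ℕ) : Word := ltr (2 * i + 10)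

/-- The letters `t_i` for `i ≥ 1`. -/
def wti (i : ℕ) : Word := ltr (2 * i + 11)

/-- `pr a len f = f (a+1) * f (a+2) * ⋯ * f (a+len)`, i.e. `∏_{i=a+1}^{a+len} f i`. -/
def pr (a len : ℕ) (f : ℕ → Word) : Word :=
  ((List.range len).map (fun i => f (a + 1 + i))).prod

/-- The word `u` read from right to left. -/
def revW (u : Word) : Word := FreeMonoid.ofList (FreeMonoid.toList u).reverse

/-- `ρ : ℕ → ℕ` is (restricts to) a permutation of `{1,…,N}`. -/
def IsPermOn (ρ : ℕ → ℕ) (N : ℕ) : Prop :=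
  Set.BijOn ρ (Set.Icc 1 N) (Set.Icc 1 N)

/-- `ρ` is a `(p,q)`-permutation: a permutation of `{1,…,p+q}` such that for each
`i = 1,…,p+q-1` exactly one of `ρ i`, `ρ (i+1)` lies in `{1,…,p}`. -/
def IsPQPerm (ρ : ℕ → ℕ) (p q : ℕ) : Prop :=
  IsPermOn ρ (p + q) ∧
    ∀ i : ℕ, 1 ≤ i → i < p + q → (ρ i ∈ Set.Icc 1 p ↔ ¬ ρ (i + 1) ∈ Set.Icc 1 p)

/-- `(n,m) ∈ N̂₀²`, i.e. `|n - m| ≤ 1`. -/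
def InHatN (n m : ℕ) : Prop := n ≤ m + 1 ∧ m ≤ n + 1

/-! ## The words `a_{n,m}[ρ]`, `c_{n,m,k}[τ]`, `d_{n,m,k}[τ]` and friends -/

/-- `a_{n,m}[ρ] = (∏_{i=1}^n z_i t_i) x (∏_{i=1}^{n+m} z_{iρ}) x (∏_{i=n+1}^{n+m} t_i z_i)`. -/
def wordA (n m : ℕ) (ρ : ℕ → ℕ) : Word :=
  pr 0 n (fun i => wzi i * wti i) * wx * pr 0 (n + m) (fun i => wzi (ρ i)) * wx *
    pr n m (fun i => wti i * wzi i)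

/-- `a'_{n,m}[ρ] = (∏_{i=1}^n z_i t_i) x² (∏_{i=1}^{n+m} z_{iρ}) (∏_{i=n+1}^{n+m} t_i z_i)`. -/
def wordA' (n m : ℕ) (ρ : ℕ → ℕ) : Word :=
  pr 0 n (fun i => wzi i * wti i) * (wx * wx) * pr 0 (n + m) (fun i => wzi (ρ i)) *
    pr n m (fun i => wti i * wzi i)

/-- `â_{n,m}[ρ]`: the word `a_{n,m}[ρ]` with both occurrences of `x` deleted. -/
def hatA (n m : ℕ) (ρ : ℕ → ℕ) : Word :=
  pr 0 n (fun i => wzi i * wti i) * pr 0 (n + m) (fun i => wzi (ρ i)) *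
    pr n m (fun i => wti i * wzi i)

/-- `c_{n,m,k}[τ]`. -/
def wordC (n m k : ℕ) (τ : ℕ → ℕ) : Word :=
  pr 0 n (fun i => wzi i * wti i) * (wx * wy * wt) * pr n m (fun i => wzi i * wti i) * wx *
    pr 0 (n + m + k) (fun i => wzi (τ i)) * wy * pr (n + m) k (fun i => wti i * wzi i)

/-- `c'_{n,m,k}[τ]` (the factor `xyt` of `c_{n,m,k}[τ]` replaced by `yxt`). -/
def wordC' (n m k : ℕ) (τ : ℕ → ℕ) : Word :=
  pr 0 n (fun i => wzi i * wti i) * (wy * wx * wt) * pr n m (fun i => wzi i * wti i) * wx *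
    pr 0 (n + m + k) (fun i => wzi (τ i)) * wy * pr (n + m) k (fun i => wti i * wzi i)

/-- `d_{n,m,k}[τ]`: the word `c_{n,m,k}[τ]` read from right to left. -/
def wordD (n m k : ℕ) (τ : ℕ → ℕ) : Word := revW (wordC n m k τ)

/-- `d'_{n,m,k}[τ]`: the word `c'_{n,m,k}[τ]` read from right to left. -/
def wordD' (n m k : ℕ) (τ : ℕ → ℕ) : Word := revW (wordC' n m k τ)

/-! ## Fully invariant congruences -/

/-- `θ` is a fully invariant congruence on the free monoid `F`. -/
structure IsFIC (θ : Word → Word → Prop) : Prop where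
  refl : ∀ u, θ u u
  symm : ∀ {u v}, θ u v → θ v u
  trans : ∀ {u v w}, θ u v → θ v w → θ u w
  mul : ∀ {u₁ v₁ u₂ v₂}, θ u₁ v₁ → θ u₂ v₂ → θ (u₁ * u₂) (v₁ * v₂)
  subst : ∀ (σ : Word →* Word) {u v}, θ u v → θ (σ u) (σ v)

/-- Containment of binary relations (sets of identities). -/
def RelLe (S θ : Word → Word → Prop) : Prop := ∀ u v, S u v → θ u v

/-- `⟨S⟩`: the least fully invariant congruence containing the set `S` of identities. -/
def ficGen (S : Word → Word → Prop) : Word → Word → Prop :=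
  fun u v => ∀ θ : Word → Word → Prop, IsFIC θ → RelLe S θ → θ u v

/-- Intersection of two relations: the meet in the lattice of fully invariant congruences. -/
def RelMeet (θ₁ θ₂ : Word → Word → Prop) : Word → Word → Prop := fun u v => θ₁ u v ∧ θ₂ u v

/-- The join of two fully invariant congruences. -/
def ficJoin (θ₁ θ₂ : Word → Word → Prop) : Word → Word → Prop :=
  ficGen (fun u v => θ₁ u v ∨ θ₂ u v)

/-- The lattice of all fully invariant congruences on `F` containing `θ` is distributive
(meets in this lattice are intersections, joins are generated joins). -/
def FICLatDistrib (θ : Word → Word → Prop) : Prop :=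
  ∀ a b c : Word → Word → Prop, IsFIC a → IsFIC b → IsFIC c →
    RelLe θ a → RelLe θ b → RelLe θ c →
      ∀ u v, RelMeet a (ficJoin b c) u v ↔ ficJoin (RelMeet a b) (RelMeet a c) u v

/-- The lattice of all fully invariant congruences on `F` containing `θ` is modular. -/
def FICLatModular (θ : Word → Word → Prop) : Prop :=
  ∀ a b c : Word → Word → Prop, IsFIC a → IsFIC b → IsFIC c →
    RelLe θ a → RelLe θ b → RelLe θ c → RelLe a c →
      ∀ u v, ficJoin a (RelMeet b c) u v ↔ RelMeet (ficJoin a b) c u v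

/-! ## Satisfaction and factor monoids -/

/-- The monoid `M` satisfies the identity `u ≈ v`. -/
def MSat (M : Type) [Monoid M] (u v : Word) : Prop := ∀ f : Word →* M, f u = f v

/-- The underlying type of the factor monoid `M(w)`: all factors (contiguous subwords)
of `w` together with an extra zero element (`none`). -/
abbrev Factor (w : List ℕ) : Type := Option { u : List ℕ // u <:+: w }

namespace Factor

variable {w : List ℕ}

instance : One (Factor w) := ⟨some ⟨[], List.nil_infix⟩⟩

instance : Mul (Factor w) :=
  ⟨fun a b =>
    match a, b with
    | none, _ => none
    | some _, none => none
    | some u, some v => if h : (u.1 ++ v.1) <:+: w then some ⟨u.1 ++ v.1, h⟩ else none⟩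

theorem none_mul (a : Factor w) : (none : Factor w) * a = none := rfl

theorem mul_none (a : Factor w) : a * (none : Factor w) = none := by cases a <;> rfl

theorem some_mul_some (u v : { u : List ℕ // u <:+: w }) :
    (some u : Factor w) * some v =
      if h : (u.1 ++ v.1) <:+: w then some ⟨u.1 ++ v.1, h⟩ else none := rfl

theorem one_def : (1 : Factor w) = some ⟨[], List.nil_infix⟩ := rfl

private theorem infix_left {u v : List ℕ} (h : (u ++ v) <:+: w) : u <:+: w :=
  (List.prefix_append u v).isInfix.trans h

private theorem infix_right {u v : List ℕ} (h : (u ++ v) <:+: w) : v <:+: w :=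
  (List.suffix_append u v).isInfix.trans h

instance : Monoid (Factor w) where
  mul_assoc a b c := by
    rcases a with _ | u
    · simp [none_mul]
    rcases b with _ | v
    · rw [mul_none, none_mul, mul_none]
    rcases c with _ | t
    · rw [mul_none, mul_none, mul_none]
    by_cases h : (u.1 ++ (v.1 ++ t.1)) <:+: w
    · have h' : ((u.1 ++ v.1) ++ t.1) <:+: w := by rwa [List.append_assoc]
      have huv : (u.1 ++ v.1) <:+: w := by
        refine infix_left (v := t.1) ?_; rwa [List.append_assoc]
      have hvt : (v.1 ++ t.1) <:+: w := infix_right h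
      rw [some_mul_some u v, dif_pos huv, some_mul_some v t, dif_pos hvt,
        some_mul_some, dif_pos h', some_mul_some, dif_pos h]
      exact congrArg some (Subtype.ext (List.append_assoc _ _ _))
    · have h' : ¬ ((u.1 ++ v.1) ++ t.1) <:+: w := by rwa [List.append_assoc]
      rw [some_mul_some u v, some_mul_some v t]
      by_cases huv : (u.1 ++ v.1) <:+: w
      · rw [dif_pos huv]
        by_cases hvt : (v.1 ++ t.1) <:+: w
        · rw [dif_pos hvt, some_mul_some, dif_neg h', some_mul_some, dif_neg h]
        · rw [dif_neg hvt, some_mul_some, dif_neg h', mul_none]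
      · rw [dif_neg huv, none_mul]
        by_cases hvt : (v.1 ++ t.1) <:+: w
        · rw [dif_pos hvt, some_mul_some, dif_neg h]
        · rw [dif_neg hvt, mul_none]
  one_mul a := by
    rcases a with _ | u
    · rw [mul_none]
    · rw [one_def, some_mul_some, dif_pos (by simpa using u.2)]
      exact congrArg some (Subtype.ext (List.nil_append _))
  mul_one a := by
    rcases a with _ | u
    · rw [none_mul]
    · rw [one_def, some_mul_some, dif_pos (by simpa using u.2)]
      exact congrArg some (Subtype.ext (List.append_nil _))

end Factor

/-- `Th(M(w))`: the set of identities holding in the factor monoid `M(w)`. -/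
def ThFM (w : List ℕ) : Word → Word → Prop :=
  fun u v => ∀ f : Word →* Factor w, f u = f v

/-! ## Distinguished identities and sets of identities -/

/-- The identity `α : xzytxy ≈ xzytyx` (as a pair of words). -/
def idAlphaL : Word := wx * wz * wy * wt * wx * wy
def idAlphaR : Word := wx * wz * wy * wt * wy * wx

/-- The identity `β : xzxyty ≈ xzyxty`. -/
def idBetaL : Word := wx * wz * wx * wy * wt * wy
def idBetaR : Word := wx * wz * wy * wx * wt * wy

/-- The set of identities defining the variety `N`:
`{x² ≈ x³, x²y ≈ yx², xyxzx ≈ x²yz, α, β}`. -/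
def SigmaN : Word → Word → Prop := fun u v =>
  (u = wx ^ 2 ∧ v = wx ^ 3) ∨
  (u = wx ^ 2 * wy ∧ v = wy * wx ^ 2) ∨
  (u = wx * wy * wx * wz * wx ∧ v = wx ^ 2 * wy * wz) ∨
  (u = idAlphaL ∧ v = idAlphaR) ∨
  (u = idBetaL ∧ v = idBetaR)

/-- `θ_N = ⟨Σ_N⟩`: the fully invariant congruence of the variety `N`. -/
def thetaN : Word → Word → Prop := ficGen SigmaN

/-- The set `Σ_P(n)` of identities defining the variety `P_n`. -/
def SigmaP (n : ℕ) : Word → Word → Prop := fun u v =>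
  (u = wx ^ n ∧ v = wx ^ (n + 1)) ∨
  (u = wx ^ 2 * wy ∧ v = wy * wx ^ 2) ∨
  (∃ (k l : ℕ) (ρ : ℕ → ℕ), IsPermOn ρ (k + l) ∧ u = wordA k l ρ ∧ v = wordA' k l ρ) ∨
  (∃ (k l m : ℕ) (τ : ℕ → ℕ), IsPermOn τ (k + l + m) ∧ u = wordC k l m τ ∧ v = wordC' k l m τ) ∨
  (∃ (k l m : ℕ) (τ : ℕ → ℕ), IsPermOn τ (k + l + m) ∧ u = wordD k l m τ ∧ v = wordD' k l m τ)

/-- The set `Σ_Q(n) = {x^n ≈ x^{n+1}, x^n y ≈ y x^n, x²y ≈ xyx}`. -/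
def SigmaQ (n : ℕ) : Word → Word → Prop := fun u v =>
  (u = wx ^ n ∧ v = wx ^ (n + 1)) ∨
  (u = wx ^ n * wy ∧ v = wy * wx ^ n) ∨
  (u = wx ^ 2 * wy ∧ v = wx * wy * wx)

/-- The set `Σ_R(n) = {x^n ≈ x^{n+1}, x²y ≈ yx², α, β}`. -/
def SigmaR (n : ℕ) : Word → Word → Prop := fun u v =>
  (u = wx ^ n ∧ v = wx ^ (n + 1)) ∨
  (u = wx ^ 2 * wy ∧ v = wy * wx ^ 2) ∨
  (u = idAlphaL ∧ v = idAlphaR) ∨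
  (u = idBetaL ∧ v = idBetaR)

/-- `Σ^δ`: the set of reversed identities (both sides read from right to left). -/
def SigmaDual (S : Word → Word → Prop) : Word → Word → Prop :=
  fun u v => ∃ a b, S a b ∧ u = revW a ∧ v = revW b

/-- Left-hand side of the identity `δ_{n,m}`: `x^m t₁ x t₂ x ⋯ t_n x`. -/
def deltaL (n m : ℕ) : Word := wx ^ m * ((List.range n).map (fun i => wti (i + 1) * wx)).prod

/-- Right-hand side of the identity `δ_{n,m}`: `x^{m+n} t₁ t₂ ⋯ t_n`. -/
def deltaR (n m : ℕ) : Word := wx ^ (m + n) * ((List.range n).map (fun i => wti (i + 1))).prod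

/-- The word `x^{e₀} ∏_{i=1}^r (t_i x^{e_i})`. -/
def wordE (r : ℕ) (e : ℕ → ℕ) : Word :=
  wx ^ (e 0) * ((List.range r).map (fun i => wti (i + 1) * wx ^ (e (i + 1)))).prod

/-- The word `x^{e₀} y^{f₀} ∏_{i=1}^r (t_i x^{e_i} y^{f_i})`. -/
def wordEF (r : ℕ) (e f : ℕ → ℕ) : Word :=
  wx ^ (e 0) * wy ^ (f 0) *
    ((List.range r).map (fun i => wti (i + 1) * wx ^ (e (i + 1)) * wy ^ (f (i + 1)))).prod

/-- The word `y^{f₀} x^{e₀} ∏_{i=1}^r (t_i x^{e_i} y^{f_i})`. -/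
def wordEF' (r : ℕ) (e f : ℕ → ℕ) : Word :=
  wy ^ (f 0) * wx ^ (e 0) *
    ((List.range r).map (fun i => wti (i + 1) * wx ^ (e (i + 1)) * wy ^ (f (i + 1)))).prod

/-! ## Aperiodicity and central idempotents -/

/-- The subset `S` of `M` is a subsemigroup which is a group under the induced
multiplication. -/
def IsGroupSubsemigroup {M : Type} [Monoid M] (S : Set M) : Prop :=
  (∀ a ∈ S, ∀ b ∈ S, a * b ∈ S) ∧
    ∃ e ∈ S, (∀ a ∈ S, e * a = a ∧ a * e = a) ∧ ∀ a ∈ S, ∃ b ∈ S, a * b = e ∧ b * a = e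

/-- `M` is aperiodic: every subsemigroup of `M` which is a group under the induced
multiplication is a singleton. -/
def Aperiodic (M : Type) [Monoid M] : Prop :=
  ∀ S : Set M, IsGroupSubsemigroup S → ∃ a, S = {a}

/-- `M` has central idempotents. -/
def CentralIdempotents (M : Type) [Monoid M] : Prop :=
  ∀ e : M, e * e = e → ∀ a : M, e * a = a * e



/-! ### Infrastructure: fully invariant congruences generated by a set -/

section Infra

theorem isFIC_ficGen (S : Word → Word → Prop) : IsFIC (ficGen S) where
  refl u := fun θ hθ _ => hθ.refl u
  symm {u v} h := fun θ hθ hS => hθ.symm (h θ hθ hS)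
  trans {u v w} h h' := fun θ hθ hS => hθ.trans (h θ hθ hS) (h' θ hθ hS)
  mul {u₁ v₁ u₂ v₂} h h' := fun θ hθ hS => hθ.mul (h θ hθ hS) (h' θ hθ hS)
  subst σ {u v} h := fun θ hθ hS => hθ.subst σ (h θ hθ hS)

theorem relLe_ficGen (S : Word → Word → Prop) : RelLe S (ficGen S) :=
  fun u v h θ _ hS => hS u v h

theorem ficGen_le {S θ : Word → Word → Prop} (hθ : IsFIC θ) (h : RelLe S θ) :
    RelLe (ficGen S) θ := fun u v hg => hg θ hθ h

theorem ficJoin_gen_iff (θ S : Word → Word → Prop) (u v : Word) :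
    ficJoin θ (ficGen S) u v ↔ ficGen (fun a b => θ a b ∨ S a b) u v := by
  constructor
  · intro h
    refine h _ (isFIC_ficGen _) ?_
    intro a b hab
    rcases hab with hab | hab
    · exact relLe_ficGen _ a b (Or.inl hab)
    · exact ficGen_le (isFIC_ficGen _) (fun c d hcd => relLe_ficGen _ c d (Or.inr hcd)) a b hab
  · intro h
    refine h _ (isFIC_ficGen _) ?_
    intro a b hab
    rcases hab with hab | hab
    · exact relLe_ficGen _ a b (Or.inl hab)
    · exact relLe_ficGen _ a b (Or.inr (relLe_ficGen _ a b hab))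

theorem ficGen_iff_of_le {S₁ S₂ : Word → Word → Prop}
    (h₁ : RelLe S₁ (ficGen S₂)) (h₂ : RelLe S₂ (ficGen S₁)) (u v : Word) :
    ficGen S₁ u v ↔ ficGen S₂ u v :=
  ⟨fun h => h _ (isFIC_ficGen _) h₁, fun h => h _ (isFIC_ficGen _) h₂⟩

end Infra

/-! ### Substitution machinery -/

/-- Substitution sending `x ↦ x` and `t_j ↦ h j` (and any other letter to itself). -/
def subE (h : ℕ → Word) : Word →* Word :=
  FreeMonoid.lift (fun a => if a = 0 then wx else
    if 11 ≤ a ∧ a % 2 = 1 then h ((a - 11) / 2) else FreeMonoid.of a)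

@[simp] theorem subE_wx (h : ℕ → Word) : subE h wx = wx := by
  simp [subE, wx, ltr]

@[simp] theorem subE_wti (h : ℕ → Word) (j : ℕ) : subE h (wti j) = h j := by
  have h1 : (2 * j + 11) ≠ 0 := by omega
  have h2 : 11 ≤ 2 * j + 11 ∧ (2 * j + 11) % 2 = 1 := ⟨by omega, by omega⟩
  have h3 : (2 * j + 11 - 11) / 2 = j := by omega
  simp [subE, wti, ltr, h1, h2, h3]

/-- Substitution sending `y ↦ w` and fixing all other letters. -/
def sub2 (w : Word) : Word →* Word :=
  FreeMonoid.lift (fun a => if a = 1 then w else FreeMonoid.of a)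

@[simp] theorem sub2_wx (w : Word) : sub2 w wx = wx := by simp [sub2, wx, ltr]
@[simp] theorem sub2_wy (w : Word) : sub2 w wy = w := by simp [sub2, wy, ltr]

/-- Tail products `∏_{i=1}^r (h i · x^{e i})`. -/
def tl (r : ℕ) (e : ℕ → ℕ) (h : ℕ → Word) : Word :=
  ((List.range r).map (fun i => h (i + 1) * wx ^ (e (i + 1)))).prod

/-- `T r = t₁ t₂ ⋯ t_r`. -/
def TT (r : ℕ) : Word := ((List.range r).map (fun i => wti (i + 1))).prod

/-- partial sums of exponents `e 1 + ⋯ + e r`. -/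
def NS (r : ℕ) (e : ℕ → ℕ) : ℕ := ∑ i ∈ Finset.range r, e (i + 1)

theorem tl_succ (r : ℕ) (e : ℕ → ℕ) (h : ℕ → Word) :
    tl (r + 1) e h = tl r e h * (h (r + 1) * wx ^ (e (r + 1))) := by
  simp [tl, List.range_succ]

theorem TT_succ (r : ℕ) : TT (r + 1) = TT r * wti (r + 1) := by
  simp [TT, List.range_succ]

theorem NS_succ (r : ℕ) (e : ℕ → ℕ) : NS (r + 1) e = NS r e + e (r + 1) := by
  simp [NS, Finset.sum_range_succ]

theorem wordE_eq (r : ℕ) (e : ℕ → ℕ) : wordE r e = wx ^ (e 0) * tl r e wti := rfl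

theorem deltaR_eq (n m : ℕ) : deltaR n m = wx ^ (m + n) * TT n := rfl

theorem deltaL_eq (n m : ℕ) : deltaL n m = wx ^ m * tl n (fun _ => 1) wti := by
  simp [deltaL, tl, pow_one]

theorem subE_tl (h : ℕ → Word) (r : ℕ) (e : ℕ → ℕ) :
    subE h (tl r e wti) = tl r e h := by
  unfold tl
  rw [map_list_prod]
  congr 1
  rw [List.map_map]
  refine List.map_congr_left ?_
  intro i _
  simp [map_mul, map_pow]

theorem subE_TT (h : ℕ → Word) (r : ℕ) :
    subE h (TT r) = ((List.range r).map (fun i => h (i + 1))).prod := by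
  unfold TT
  rw [map_list_prod]
  congr 1
  rw [List.map_map]
  refine List.map_congr_left ?_
  intro i _
  simp

theorem subE_wordE (h : ℕ → Word) (r : ℕ) (e : ℕ → ℕ) :
    subE h (wordE r e) = wx ^ (e 0) * tl r e h := by
  rw [wordE_eq, map_mul, map_pow, subE_wx, subE_tl]

theorem subE_deltaL (h : ℕ → Word) (n m : ℕ) :
    subE h (deltaL n m) = wx ^ m * tl n (fun _ => 1) h := by
  rw [deltaL_eq, map_mul, map_pow, subE_wx, subE_tl]

theorem subE_deltaR (h : ℕ → Word) (n m : ℕ) :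
    subE h (deltaR n m) = wx ^ (m + n) * ((List.range n).map (fun i => h (i + 1))).prod := by
  rw [deltaR_eq, map_mul, map_pow, subE_wx, subE_TT]

theorem tl_congr {r : ℕ} {e e' : ℕ → ℕ} {h h' : ℕ → Word}
    (he : ∀ i, 1 ≤ i → i ≤ r → e i = e' i) (hh : ∀ i, 1 ≤ i → i ≤ r → h i = h' i) :
    tl r e h = tl r e' h' := by
  unfold tl
  congr 1
  refine List.map_congr_left ?_
  intro i hi
  have hi' : i < r := List.mem_range.mp hi
  rw [he (i+1) (by omega) (by omega), hh (i+1) (by omega) (by omega)]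

theorem wordE_congr {r : ℕ} {e f : ℕ → ℕ} (h : ∀ i, i ≤ r → e i = f i) :
    wordE r e = wordE r f := by
  rw [wordE_eq, wordE_eq, h 0 (by omega),
    tl_congr (fun i h1 h2 => h i h2) (fun _ _ _ => rfl)]

theorem NS_congr {r : ℕ} {e f : ℕ → ℕ} (h : ∀ i, 1 ≤ i → i ≤ r → e i = f i) :
    NS r e = NS r f := by
  unfold NS
  refine Finset.sum_congr rfl ?_
  intro i hi
  have := Finset.mem_range.mp hi
  exact h (i+1) (by omega) (by omega)



/-! ### Rewriting inside a fully invariant congruence -/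

namespace IsFIC

variable {γ : Word → Word → Prop}

theorem mulr (hγ : IsFIC γ) {a b : Word} (h : γ a b) (w : Word) : γ (a * w) (b * w) :=
  hγ.mul h (hγ.refl w)

theorem mull (hγ : IsFIC γ) (w : Word) {a b : Word} (h : γ a b) : γ (w * a) (w * b) :=
  hγ.mul (hγ.refl w) h

theorem of_eq (hγ : IsFIC γ) {a b : Word} (h : a = b) : γ a b := h ▸ hγ.refl a

theorem trans_eq (hγ : IsFIC γ) {a b c : Word} (h : γ a b) (h' : b = c) : γ a c :=
  hγ.trans h (hγ.of_eq h')

theorem eq_trans (hγ : IsFIC γ) {a b c : Word} (h : a = b) (h' : γ b c) : γ a c :=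
  hγ.trans (hγ.of_eq h) h'

end IsFIC

section Gamma

variable {γ : Word → Word → Prop}

/-- `γ` identifies all powers `x^c` for `c ≥ τ`. -/
def Thr (γ : Word → Word → Prop) (τ : ℕ) : Prop :=
  ∀ c d, τ ≤ c → τ ≤ d → γ (wx ^ c) (wx ^ d)

theorem cenAll (hγ : IsFIC γ) (hcen : γ (wx ^ 2 * wy) (wy * wx ^ 2)) (w : Word) :
    γ (wx ^ 2 * w) (w * wx ^ 2) := by
  have := hγ.subst (sub2 w) hcen
  simpa [map_mul, map_pow] using this

theorem cenEven (hγ : IsFIC γ) (hcen : γ (wx ^ 2 * wy) (wy * wx ^ 2)) (k : ℕ) (w : Word) :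
    γ (wx ^ (2 * k) * w) (w * wx ^ (2 * k)) := by
  induction k generalizing w with
  | zero => exact hγ.of_eq (by simp)
  | succ n ih =>
    have h1 : γ (wx ^ (2 * (n+1)) * w) (wx ^ (2 * n) * (w * wx ^ 2)) := by
      refine hγ.eq_trans (a := wx ^ (2*(n+1)) * w) (by rw [show 2*(n+1) = 2*n + 2 by ring,
        pow_add, mul_assoc]) ?_
      exact hγ.mull _ (cenAll hγ hcen w)
    refine hγ.trans h1 ?_
    have h2 : γ (wx ^ (2*n) * (w * wx ^ 2)) ((w * wx ^ 2) * wx ^ (2*n)) := ih (w * wx ^ 2)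
    refine hγ.trans h2 (hγ.of_eq ?_)
    rw [show 2*(n+1) = 2 + 2*n by ring, pow_add, mul_assoc]

/-- move an even power of `x` to the front. -/
theorem dmove (hγ : IsFIC γ) (hcen : γ (wx ^ 2 * wy) (wy * wx ^ 2)) (P Q : Word) (k : ℕ) :
    γ (P * wx ^ (2 * k) * Q) (wx ^ (2 * k) * P * Q) :=
  hγ.mulr (hγ.symm (cenEven hγ hcen k P)) Q

theorem thr_of_step (hγ : IsFIC γ) {s : ℕ} (hs : γ (wx ^ s) (wx ^ (s + 1))) : Thr γ s := by
  have step : ∀ a, s ≤ a → γ (wx ^ a) (wx ^ (a + 1)) := by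
    intro a ha
    have := hγ.mull (wx ^ (a - s)) hs
    refine hγ.eq_trans (by rw [← pow_add]; congr 1 <;> omega) (hγ.trans_eq this ?_)
    rw [← pow_add]; congr 1 <;> omega
  have up : ∀ a, s ≤ a → ∀ k, γ (wx ^ a) (wx ^ (a + k)) := by
    intro a ha k
    induction k with
    | zero => exact hγ.refl _
    | succ n ih => exact hγ.trans ih (step (a + n) (by omega))
  intro c d hc hd
  rcases le_total c d with h | h
  · have := up c hc (d - c); rwa [show c + (d - c) = d by omega] at this
  · have := up d hd (c - d); rw [show d + (c - d) = c by omega] at this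
    exact hγ.symm this

theorem thr_improve (hγ : IsFIC γ) {s a b : ℕ} (hthr : Thr γ s)
    (hab : γ (wx ^ a) (wx ^ b)) (hlt : a < b) : Thr γ (min s a) := by
  -- climb from any c ≥ a to some exponent ≥ s
  have step : ∀ c, a ≤ c → γ (wx ^ c) (wx ^ (c + (b - a))) := by
    intro c hc
    have := hγ.mull (wx ^ (c - a)) hab
    refine hγ.eq_trans (by rw [← pow_add]; congr 1 <;> omega) (hγ.trans_eq this ?_)
    rw [← pow_add]; congr 1 <;> omega
  have climb : ∀ k, ∀ c, a ≤ c → γ (wx ^ c) (wx ^ (c + k * (b - a))) := by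
    intro k
    induction k with
    | zero => intro c _; exact hγ.of_eq (by ring_nf)
    | succ n ih =>
      intro c hc
      refine hγ.trans (ih c hc) ?_
      have := step (c + n * (b - a)) (by omega)
      refine hγ.trans_eq this (by congr 1; ring)
  have reach : ∀ c, min s a ≤ c → ∃ d, s ≤ d ∧ γ (wx ^ c) (wx ^ d) := by
    intro c hc
    by_cases hcs : s ≤ c
    · exact ⟨c, hcs, hγ.refl _⟩
    · have hca : a ≤ c := by omega
      refine ⟨c + s * (b - a), by nlinarith [Nat.sub_pos_of_lt hlt], climb s c hca⟩
  intro c d hc hd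
  obtain ⟨c', hc', h1⟩ := reach c hc
  obtain ⟨d', hd', h2⟩ := reach d hd
  exact hγ.trans h1 (hγ.trans (hthr c' d' hc' hd') (hγ.symm h2))

/-- δ at high levels: `x^M w x ≈ x^{M+1} w` whenever `M ≥ τ`. -/
theorem dhigh (hγ : IsFIC γ) (hcen : γ (wx ^ 2 * wy) (wy * wx ^ 2)) {τ : ℕ}
    (hthr : Thr γ τ) {M : ℕ} (hM : τ ≤ M) (w : Word) :
    γ (wx ^ M * w * wx) (wx ^ (M + 1) * w) := by
  set E := M + M % 2 with hE
  have hEeq : 2 * (E / 2) = E := by omega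
  have h1 : γ (wx ^ M * w * wx) (wx ^ E * w * wx) :=
    hγ.mulr (hγ.mulr (hthr M E hM (by omega)) w) wx
  have h2 : γ (wx ^ E * w * wx) (w * wx ^ (E + 1)) := by
    have := hγ.mulr (cenEven hγ hcen (E / 2) w) wx
    rw [hEeq] at this
    exact hγ.trans this (hγ.of_eq (by rw [mul_assoc, ← pow_succ]))
  have h3 : γ (w * wx ^ (E + 1)) (w * wx ^ E) := hγ.mull w (hthr (E+1) E (by omega) (by omega))
  have h4 : γ (w * wx ^ E) (wx ^ E * w) := by
    have := hγ.symm (cenEven hγ hcen (E / 2) w)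
    rwa [hEeq] at this
  have h5 : γ (wx ^ E * w) (wx ^ (M + 1) * w) := hγ.mulr (hthr E (M+1) (by omega) (by omega)) w
  exact hγ.trans h1 (hγ.trans h2 (hγ.trans h3 (hγ.trans h4 h5)))

/-- Collect all interior `x`'s of a tail at a high level `M ≥ τ`. -/
theorem collectHigh (hγ : IsFIC γ) (hcen : γ (wx ^ 2 * wy) (wy * wx ^ 2)) {τ : ℕ}
    (hthr : Thr γ τ) {M : ℕ} (hM : τ ≤ M) (r : ℕ) (e : ℕ → ℕ)
    (hb : ∀ i, 1 ≤ i → i ≤ r → e i ≤ 1) :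
    γ (wx ^ M * tl r e wti) (wx ^ (M + NS r e) * TT r) := by
  induction r with
  | zero => exact hγ.of_eq (by simp [tl, TT, NS])
  | succ n ih =>
    have ihn := ih (fun i h1 h2 => hb i h1 (by omega))
    have h1 : γ (wx ^ M * tl (n+1) e wti)
        ((wx ^ (M + NS n e) * TT n) * (wti (n+1) * wx ^ (e (n+1)))) := by
      refine hγ.eq_trans (by rw [tl_succ, ← mul_assoc]) ?_
      exact hγ.mulr ihn _
    refine hγ.trans h1 ?_
    have hcase := hb (n+1) (by omega) (by omega)
    interval_cases h : e (n + 1)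
    · refine hγ.of_eq ?_
      simp [NS_succ, h, TT_succ, mul_assoc]
    · have := dhigh hγ hcen hthr (M := M + NS n e) (by omega) (TT (n+1))
      refine hγ.trans (hγ.of_eq ?_) (hγ.trans this (hγ.of_eq ?_))
      · rw [pow_one, TT_succ, mul_assoc, mul_assoc, mul_assoc]
      · simp [NS_succ, h, Nat.add_assoc]
  -- done

end Gamma



/-! ### Pattern surgery: deletion, insertion, splitting -/

/-- Pattern obtained by deleting position `i` and merging its exponent leftwards. -/
def emrg (i : ℕ) (e : ℕ → ℕ) : ℕ → ℕ :=
  fun k => if k + 1 < i then e k else if k + 1 = i then e k + e i else e (k + 1)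

/-- Letter deletion substitution. -/
def hdel (i : ℕ) : ℕ → Word :=
  fun j => if j < i then wti j else if j = i then 1 else wti (j - 1)

/-- Letter insertion substitution. -/
def hins (i : ℕ) : ℕ → Word :=
  fun j => if j < i then wti j else if j = i then wti i * wti (i + 1) else wti (j + 1)

/-- `Tp r h = h 1 * ⋯ * h r`. -/
def Tp (r : ℕ) (h : ℕ → Word) : Word := ((List.range r).map (fun i => h (i + 1))).prod

theorem Tp_succ (r : ℕ) (h : ℕ → Word) : Tp (r + 1) h = Tp r h * h (r + 1) := by
  simp [Tp, List.range_succ]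

theorem TT_eq_Tp (r : ℕ) : TT r = Tp r wti := rfl

theorem Tp_congr {r : ℕ} {h h' : ℕ → Word} (hh : ∀ i, 1 ≤ i → i ≤ r → h i = h' i) :
    Tp r h = Tp r h' := by
  unfold Tp
  congr 1
  refine List.map_congr_left ?_
  intro i hi
  have := List.mem_range.mp hi
  exact hh (i + 1) (by omega) (by omega)

theorem subE_TT' (h : ℕ → Word) (r : ℕ) : subE h (TT r) = Tp r h := subE_TT h r

/-- suffix product `∏_{i=k+1}^{k+m} (t_i x^{e i})`. -/
def tsf (k m : ℕ) (e : ℕ → ℕ) : Word :=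
  ((List.range m).map (fun i => wti (k + 1 + i) * wx ^ (e (k + 1 + i)))).prod

theorem tsf_succ (k m : ℕ) (e : ℕ → ℕ) :
    tsf k (m + 1) e = tsf k m e * (wti (k + 1 + m) * wx ^ (e (k + 1 + m))) := by
  simp [tsf, List.range_succ]

theorem tsf_congr {k m : ℕ} {e e' : ℕ → ℕ}
    (he : ∀ i, k + 1 ≤ i → i ≤ k + m → e i = e' i) : tsf k m e = tsf k m e' := by
  unfold tsf
  congr 1
  refine List.map_congr_left ?_
  intro i hi
  have := List.mem_range.mp hi
  rw [he (k + 1 + i) (by omega) (by omega)]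

theorem tl_split (e : ℕ → ℕ) : ∀ m k, tl (k + m) e wti = tl k e wti * tsf k m e := by
  intro m
  induction m with
  | zero => intro k; simp [tsf]
  | succ n ih =>
    intro k
    rw [show k + (n + 1) = (k + n) + 1 by omega, tl_succ, ih k, tsf_succ, mul_assoc]
    have h1 : k + n + 1 = k + 1 + n := by omega
    rw [h1]

theorem tl_split' {k r : ℕ} (h : k ≤ r) (e : ℕ → ℕ) :
    tl r e wti = tl k e wti * tsf k (r - k) e := by
  have := tl_split e (r - k) k
  rwa [show k + (r - k) = r by omega] at this

theorem tl_peel {k : ℕ} (h : 1 ≤ k) (e : ℕ → ℕ) (hh : ℕ → Word) :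
    tl k e hh = tl (k - 1) e hh * (hh k * wx ^ (e k)) := by
  have := tl_succ (k - 1) e hh
  rwa [show k - 1 + 1 = k by omega] at this

theorem TT_peel {k : ℕ} (h : 1 ≤ k) : TT k = TT (k - 1) * wti k := by
  have := TT_succ (k - 1)
  rwa [show k - 1 + 1 = k by omega] at this

theorem tl_ones (r : ℕ) (e : ℕ → ℕ) : tl r e (fun _ => (1 : Word)) = wx ^ (NS r e) := by
  induction r with
  | zero => simp [tl, NS]
  | succ n ih => rw [tl_succ, ih, NS_succ, pow_add, one_mul]

/-- Evaluation of the deletion substitution on a pattern word. -/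
theorem tl_del (e : ℕ → ℕ) {i : ℕ} (hi : 1 ≤ i) :
    ∀ m, wx ^ (e 0) * tl (i + m) e (hdel i) =
      wx ^ (emrg i e 0) * tl (i + m - 1) (emrg i e) wti := by
  have keyb : wx ^ (emrg i e 0) * tl (i - 1) (emrg i e) wti
      = wx ^ (e 0) * tl (i - 1) e wti * wx ^ (e i) := by
    rcases Nat.lt_or_ge i 2 with hi1 | hi2
    · have hi1 : i = 1 := by omega
      subst hi1
      have h0 : emrg 1 e 0 = e 0 + e 1 := by simp [emrg]
      rw [h0]
      simp [tl, pow_add]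
    · have h0 : emrg i e 0 = e 0 := by
        unfold emrg; rw [if_pos (by omega)]
      have hlast : i - 1 = (i - 2) + 1 := by omega
      rw [h0, hlast, tl_succ, tl_succ]
      have hsl : emrg i e (i - 2 + 1) = e (i - 2 + 1) + e i := by
        unfold emrg
        rw [if_neg (by omega), if_pos (by omega)]
      have hpre : tl (i - 2) (emrg i e) wti = tl (i - 2) e wti := by
        refine tl_congr (fun m h1 h2 => ?_) (fun _ _ _ => rfl)
        unfold emrg
        rw [if_pos (by omega)]
      rw [hsl, hpre, pow_add]
      simp [mul_assoc]
  intro m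
  induction m with
  | zero =>
    simp only [Nat.add_zero]
    rw [show i = (i - 1) + 1 by omega, tl_succ, show i - 1 + 1 = i by omega]
    have h2 : hdel i i = 1 := by simp [hdel]
    have h3 : tl (i - 1) e (hdel i) = tl (i - 1) e wti := by
      refine tl_congr (fun _ _ _ => rfl) (fun m h1 h2 => ?_)
      unfold hdel
      rw [if_pos (by omega)]
    rw [h2, h3, keyb]
    all_goals simp [mul_assoc]
  | succ n ih =>
    rw [show i + (n + 1) = (i + n) + 1 by omega, tl_succ]
    have h2 : hdel i (i + n + 1) = wti (i + n) := by
      unfold hdel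
      rw [if_neg (by omega), if_neg (by omega)]
      congr 1 <;> omega
    rw [h2, ← mul_assoc, ih]
    rw [show i + n + 1 - 1 = (i + n - 1) + 1 by omega, tl_succ]
    have h4 : emrg i e (i + n - 1 + 1) = e (i + n + 1) := by
      unfold emrg
      rw [if_neg (by omega), if_neg (by omega)]
      congr 1 <;> omega
    rw [h4, show i + n - 1 + 1 = i + n by omega]
    all_goals simp [mul_assoc]

/-- Evaluation of the insertion substitution on a (deleted) pattern word. -/
theorem tl_ins (f : ℕ → ℕ) {i : ℕ} (hi : 1 ≤ i) (hf : f i = 0) :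
    ∀ m, wx ^ (emrg i f 0) * tl (i + m) (emrg i f) (hins i) =
      wx ^ (f 0) * tl (i + m + 1) f wti := by
  have h0 : emrg i f 0 = f 0 := by
    unfold emrg
    rcases Nat.lt_or_ge i 2 with h | h
    · have hi1 : i = 1 := by omega
      subst hi1
      rw [if_neg (by omega), if_pos (by omega), hf]
      -- f 0 + 0 = f 0
      omega
    · rw [if_pos (by omega)]
  intro m
  induction m with
  | zero =>
    simp only [Nat.add_zero]
    rw [show i = (i - 1) + 1 by omega, tl_succ, show i - 1 + 1 = i by omega]
    have h1 : hins i i = wti i * wti (i + 1) := by simp [hins]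
    have h2 : emrg i f i = f (i + 1) := by
      unfold emrg
      rw [if_neg (by omega), if_neg (by omega)]
    have h3 : tl (i - 1) (emrg i f) (hins i) = tl (i - 1) f wti := by
      refine tl_congr (fun m hm1 hm2 => ?_) (fun m hm1 hm2 => ?_)
      · unfold emrg
        rcases Nat.lt_or_ge (m + 1) i with h | h
        · rw [if_pos h]
        · rw [if_neg (by omega), if_pos (by omega), hf]
          omega
      · unfold hins
        rw [if_pos (by omega)]
    rw [h1, h2, h3, h0]
    -- RHS
    have hr : tl (i + 1) f wti
        = tl (i - 1) f wti * (wti i * wx ^ f i) * (wti (i + 1) * wx ^ f (i + 1)) := by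
      rw [show i + 1 = ((i - 1) + 1) + 1 by omega, tl_succ, tl_succ]
      simp only [show i - 1 + 1 = i from by omega]
    rw [hr, hf]
    simp [mul_assoc]
  | succ n ih =>
    rw [tl_succ, show i + (n + 1) = i + n + 1 from by omega, tl_succ]
    have h2 : hins i (i + n + 1) = wti (i + n + 2) := by
      unfold hins
      rw [if_neg (by omega), if_neg (by omega)]
    have h4 : emrg i f (i + n + 1) = f (i + n + 2) := by
      unfold emrg
      rw [if_neg (by omega), if_neg (by omega)]
    rw [h2, h4, ← mul_assoc, ih, show i + n + 1 + 1 = i + n + 2 from by omega]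
    all_goals simp [mul_assoc]

theorem Tp_ins {i : ℕ} (hi : 1 ≤ i) :
    ∀ m, Tp (i + m) (hins i) = Tp (i + m + 1) wti := by
  intro m
  induction m with
  | zero =>
    simp only [Nat.add_zero]
    rw [show i = (i - 1) + 1 by omega, Tp_succ, show i - 1 + 1 = i by omega]
    have h1 : hins i i = wti i * wti (i + 1) := by simp [hins]
    have h3 : Tp (i - 1) (hins i) = Tp (i - 1) wti := by
      refine Tp_congr (fun m hm1 hm2 => ?_)
      unfold hins
      rw [if_pos (by omega)]
    have hr : Tp (i + 1) wti = Tp (i - 1) wti * wti i * wti (i + 1) := by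
      rw [show i + 1 = ((i - 1) + 1) + 1 by omega, Tp_succ, Tp_succ]
      simp only [show i - 1 + 1 = i from by omega]
    rw [h1, h3, hr, mul_assoc]
  | succ n ih =>
    rw [Tp_succ, show i + (n + 1) = i + n + 1 from by omega, Tp_succ, ih]
    have h2 : hins i (i + n + 1) = wti (i + n + 2) := by
      unfold hins
      rw [if_neg (by omega), if_neg (by omega)]
    rw [h2, show i + n + 1 + 1 = i + n + 2 from by omega]
    all_goals simp

/-- The ranking substitution: `t_j ↦ t_{rank j}` if `e j = 1`, else `t_j ↦ 1`. -/
def hrk (e : ℕ → ℕ) : ℕ → Word := fun j => if e j = 1 then wti (NS j e) else 1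

theorem tl_rank (e : ℕ → ℕ) {r : ℕ} (hb : ∀ i, 1 ≤ i → i ≤ r → e i ≤ 1) :
    tl r e (hrk e) = tl (NS r e) (fun _ => 1) wti := by
  induction r with
  | zero => simp [tl, NS]
  | succ n ih =>
    have ihn := ih (fun i h1 h2 => hb i h1 (by omega))
    rw [tl_succ, ihn]
    have hc := hb (n + 1) (by omega) (by omega)
    interval_cases h : e (n + 1)
    · have h1 : hrk e (n + 1) = 1 := by simp [hrk, h]
      rw [h1, NS_succ, h]
      all_goals simp
    · have h1 : hrk e (n + 1) = wti (NS (n + 1) e) := by simp [hrk, h]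
      rw [h1, NS_succ, h, tl_succ]
      all_goals simp

theorem Tp_rank (e : ℕ → ℕ) {r : ℕ} (hb : ∀ i, 1 ≤ i → i ≤ r → e i ≤ 1) :
    Tp r (hrk e) = Tp (NS r e) wti := by
  induction r with
  | zero => simp [Tp, NS]
  | succ n ih =>
    have ihn := ih (fun i h1 h2 => hb i h1 (by omega))
    rw [Tp_succ, ihn]
    have hc := hb (n + 1) (by omega) (by omega)
    interval_cases h : e (n + 1)
    · have h1 : hrk e (n + 1) = 1 := by simp [hrk, h]
      rw [h1, NS_succ, h]
      all_goals simp
    · have h1 : hrk e (n + 1) = wti (NS (n + 1) e) := by simp [hrk, h]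
      rw [h1, NS_succ, h, Tp_succ]

/-- Block decomposition: a pattern word is a substitution instance of `deltaL`. -/
theorem blocks (r : ℕ) (e : ℕ → ℕ) (hb : ∀ i, 1 ≤ i → i ≤ r → e i ≤ 1) :
    ∃ (g : ℕ → Word) (B : Word),
      wx ^ (e 0) * tl (NS r e) (fun _ => 1) g * B = wordE r e ∧
      Tp (NS r e) g * B = TT r := by
  induction r with
  | zero =>
    refine ⟨fun _ => 1, 1, ?_, ?_⟩ <;> simp [NS, tl, Tp, TT, wordE_eq]
  | succ n ih =>
    obtain ⟨g, B, hg1, hg2⟩ := ih (fun i h1 h2 => hb i h1 (by omega))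
    have hc := hb (n + 1) (by omega) (by omega)
    interval_cases h : e (n + 1)
    · refine ⟨g, B * wti (n + 1), ?_, ?_⟩
      · conv_rhs => rw [wordE_eq, tl_succ, ← mul_assoc, ← wordE_eq, ← hg1]
        rw [NS_succ, h]
        simp [mul_assoc]
      · rw [NS_succ, h, Nat.add_zero, TT_succ, ← hg2, mul_assoc]
    · refine ⟨fun j => if j = NS n e + 1 then B * wti (n + 1) else g j, 1, ?_, ?_⟩
      · have hcg : tl (NS n e) (fun _ => 1)
            (fun j => if j = NS n e + 1 then B * wti (n + 1) else g j)
            = tl (NS n e) (fun _ => 1) g := by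
          refine tl_congr (fun _ _ _ => rfl) (fun m h1 h2 => ?_)
          rw [if_neg (by omega)]
        conv_rhs => rw [wordE_eq, tl_succ, ← mul_assoc, ← wordE_eq, ← hg1]
        rw [NS_succ, h, tl_succ, hcg]
        simp [mul_assoc]
      · have hcg : Tp (NS n e)
            (fun j => if j = NS n e + 1 then B * wti (n + 1) else g j)
            = Tp (NS n e) g := by
          refine Tp_congr (fun m h1 h2 => ?_)
          rw [if_neg (by omega)]
        rw [NS_succ, h, Tp_succ, hcg, if_pos rfl, TT_succ, ← hg2]
        simp [mul_assoc]



/-! ### Surgery steps inside the congruence -/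

section Gamma2

variable {γ : Word → Word → Prop}

theorem gamma_pow (hγ : IsFIC γ) {r : ℕ} {e f : ℕ → ℕ}
    (hUV : γ (wordE r e) (wordE r f)) :
    γ (wx ^ (e 0 + NS r e)) (wx ^ (f 0 + NS r f)) := by
  have := hγ.subst (subE (fun _ => 1)) hUV
  rw [subE_wordE, subE_wordE, tl_ones, tl_ones, ← pow_add, ← pow_add] at this
  exact this

theorem pow_transfer (hγ : IsFIC γ) {s : ℕ} (hthr : Thr γ s) {a b : ℕ}
    (hab : γ (wx ^ a) (wx ^ b)) (w : Word) : γ (wx ^ a * w) (wx ^ b * w) := by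
  rcases lt_trichotomy a b with h | h | h
  · have thr := thr_improve hγ hthr hab h
    exact hγ.mulr (thr a b (by omega) (by omega)) w
  · subst h; exact hγ.refl _
  · have thr := thr_improve hγ hthr (hγ.symm hab) h
    exact hγ.mulr (thr a b (by omega) (by omega)) w

theorem collTransfer (hγ : IsFIC γ) {s : ℕ} (hthr : Thr γ s) {u v : Word} {cu cv : ℕ} {r : ℕ}
    (huv : γ u v) (hcu : γ u (wx ^ cu * TT r)) (hpow : γ (wx ^ cu) (wx ^ cv)) :
    γ v (wx ^ cv * TT r) :=
  hγ.trans (hγ.symm huv) (hγ.trans hcu (pow_transfer hγ hthr hpow (TT r)))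

theorem deleteStep (hγ : IsFIC γ) {r i : ℕ} (hi1 : 1 ≤ i) (hir : i ≤ r) {e f : ℕ → ℕ}
    (hUV : γ (wordE r e) (wordE r f)) :
    γ (wordE (r - 1) (emrg i e)) (wordE (r - 1) (emrg i f)) := by
  have h := hγ.subst (subE (hdel i)) hUV
  rw [subE_wordE, subE_wordE] at h
  have he := tl_del e hi1 (r - i)
  have hf := tl_del f hi1 (r - i)
  rw [show i + (r - i) = r by omega] at he hf
  rw [he, hf] at h
  rw [wordE_eq, wordE_eq]
  exact h

theorem reconstruct (hγ : IsFIC γ) {r i : ℕ} (hi1 : 1 ≤ i) (hir : i ≤ r) {f : ℕ → ℕ}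
    (hfi : f i = 0) {X : ℕ}
    (hcol : γ (wordE (r - 1) (emrg i f)) (wx ^ X * TT (r - 1))) :
    γ (wordE r f) (wx ^ X * TT r) := by
  rcases Nat.lt_or_ge i r with hlt | hge
  · -- insert t_i back, attaching it to the following letter
    have h := hγ.subst (subE (hins i)) hcol
    rw [subE_wordE, map_mul, map_pow, subE_wx, subE_TT'] at h
    have he := tl_ins f hi1 hfi (r - 1 - i)
    rw [show i + (r - 1 - i) = r - 1 by omega] at he
    rw [show r - 1 + 1 = r by omega] at he
    have hT := Tp_ins hi1 (r - 1 - i)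
    rw [show i + (r - 1 - i) = r - 1 by omega] at hT
    rw [show r - 1 + 1 = r by omega] at hT
    rw [he, hT, ← TT_eq_Tp, ← wordE_eq] at h
    exact h
  · -- i = r : append t_r on the right
    have hieq : i = r := by omega
    subst hieq
    have h := hγ.mulr hcol (wti i)
    have h1 : wordE (i - 1) (emrg i f) * wti i = wordE i f := by
      have hc : wordE (i - 1) (emrg i f) = wordE (i - 1) f := by
        refine wordE_congr (fun k hk => ?_)
        unfold emrg
        rcases Nat.lt_or_ge (k + 1) i with h' | h'
        · rw [if_pos h']
        · rw [if_neg (by omega), if_pos (by omega), show f i = 0 from hfi]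
          omega
      rw [hc, wordE_eq, wordE_eq, tl_peel (by omega : 1 ≤ i), hfi]
      simp [mul_assoc]
    have h2 : wx ^ X * TT (i - 1) * wti i = wx ^ X * TT i := by
      rw [TT_peel (by omega : 1 ≤ i), mul_assoc]
    rw [h1, h2] at h
    exact h

/-- the reduced pattern: an exponent 2 at slot `k` is moved to the front. -/
def gred (k : ℕ) (g : ℕ → ℕ) : ℕ → ℕ :=
  fun j => if j = 0 then g 0 + 2 else if j = k then 0 else g j

theorem red2 (hγ : IsFIC γ) (hcen : γ (wx ^ 2 * wy) (wy * wx ^ 2)) {r k : ℕ}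
    (hk1 : 1 ≤ k) (hkr : k ≤ r) {g : ℕ → ℕ} (hgk : g k = 2) :
    γ (wordE r g) (wordE r (gred k g)) := by
  have hsplit : wordE r g =
      (wx ^ (g 0) * tl (k - 1) g wti * wti k) * wx ^ (2 * 1) * tsf k (r - k) g := by
    rw [wordE_eq, tl_split' hkr, tl_peel hk1, hgk]
    simp [mul_assoc]
  have hmove := dmove hγ hcen (wx ^ (g 0) * tl (k - 1) g wti * wti k) (tsf k (r - k) g) 1
  have htarget : wx ^ (2 * 1) * (wx ^ (g 0) * tl (k - 1) g wti * wti k) * tsf k (r - k) g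
      = wordE r (gred k g) := by
    have hc1 : tl (k - 1) g wti = tl (k - 1) (gred k g) wti := by
      refine tl_congr (fun m h1 h2 => ?_) (fun _ _ _ => rfl)
      unfold gred
      rw [if_neg (by omega), if_neg (by omega)]
    have hc2 : tsf k (r - k) g = tsf k (r - k) (gred k g) := by
      refine tsf_congr (fun m h1 h2 => ?_)
      unfold gred
      rw [if_neg (by omega), if_neg (by omega)]
    have hg0 : gred k g 0 = g 0 + 2 := by simp [gred]
    have hgk0 : gred k g k = 0 := by
      unfold gred
      rw [if_neg (by omega), if_pos rfl]
    rw [wordE_eq, tl_split' hkr, tl_peel hk1, hg0, hgk0, ← hc1, ← hc2, pow_add]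
    simp [mul_assoc]
    conv_lhs => rw [← mul_assoc, ← pow_add]
    conv_rhs => rw [← mul_assoc, ← pow_add]
    rw [Nat.add_comm]
  exact hγ.eq_trans hsplit (hγ.trans_eq hmove htarget)

/-- x-count is preserved by deletion-with-merge. -/
theorem NS_emrg (e : ℕ → ℕ) {i : ℕ} (hi : 1 ≤ i) :
    ∀ m, emrg i e 0 + NS (i + m - 1) (emrg i e) = e 0 + NS (i + m) e := by
  have base : emrg i e 0 + NS (i - 1) (emrg i e) = e 0 + NS i e := by
    rcases Nat.lt_or_ge i 2 with h | h
    · have h1 : i = 1 := by omega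
      subst h1
      have : emrg 1 e 0 = e 0 + e 1 := by simp [emrg]
      rw [this]
      simp [NS]
    · have h0 : emrg i e 0 = e 0 := by
        unfold emrg; rw [if_pos (by omega)]
      have h1 : NS (i - 1) (emrg i e) = NS (i - 2) (emrg i e) + (e (i - 1) + e i) := by
        rw [show i - 1 = (i - 2) + 1 by omega, NS_succ]
        congr 1
        unfold emrg
        rw [if_neg (by omega), if_pos (by omega)]
      have h2 : NS (i - 2) (emrg i e) = NS (i - 2) e := by
        refine NS_congr (fun m hm1 hm2 => ?_)
        unfold emrg
        rw [if_pos (by omega)]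
      have h3 : NS i e = NS (i - 2) e + e (i - 1) + e i := by
        rw [show i = (i - 2) + 1 + 1 by omega, NS_succ, NS_succ,
          show i - 2 + 1 = i - 1 by omega, show i - 1 + 1 = i by omega]
      rw [h0, h1, h2, h3]
      omega
  intro m
  induction m with
  | zero => simpa using base
  | succ n ih =>
    have h1 : NS (i + (n + 1) - 1) (emrg i e) = NS (i + n - 1) (emrg i e) + e (i + n + 1) := by
      rw [show i + (n + 1) - 1 = (i + n - 1) + 1 by omega, NS_succ]
      congr 1
      unfold emrg
      rw [if_neg (by omega), if_neg (by omega)]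
      congr 1 <;> omega
    have h2 : NS (i + (n + 1)) e = NS (i + n) e + e (i + n + 1) := by
      rw [show i + (n + 1) = (i + n) + 1 by omega, NS_succ]
    omega

/-- Case where the two sides have equal profiles but different fronts. -/
theorem caseA (hγ : IsFIC γ) (hcen : γ (wx ^ 2 * wy) (wy * wx ^ 2)) {s : ℕ}
    (hthr : Thr γ s) {r : ℕ} {e f : ℕ → ℕ}
    (hbe : ∀ i, 1 ≤ i → i ≤ r → e i ≤ 1)
    (he0 : e 0 < f 0) (hprof : ∀ i, 1 ≤ i → i ≤ r → e i = f i)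
    (hUV : γ (wordE r e) (wordE r f)) :
    γ (wordE r e) (wx ^ (e 0 + NS r e) * TT r) := by
  set W := tl r e wti with hW
  have hfW : wordE r f = wx ^ (f 0) * W := by
    rw [wordE_eq]
    congr 1
    exact (tl_congr (fun i h1 h2 => (hprof i h1 h2).symm) (fun _ _ _ => rfl))
  have hUV' : γ (wx ^ (e 0) * W) (wx ^ (f 0) * W) := by
    rw [← wordE_eq, ← hfW]; exact hUV
  set D := f 0 - e 0 with hD
  have hpump : ∀ k, γ (wx ^ (e 0) * W) (wx ^ (e 0 + k * D) * W) := by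
    intro k
    induction k with
    | zero => exact hγ.of_eq (by norm_num)
    | succ n ih =>
      refine hγ.trans ih ?_
      have := hγ.mull (wx ^ (n * D)) hUV'
      have h1 : γ (wx ^ (e 0 + n * D) * W) (wx ^ (f 0 + n * D) * W) := by
        refine hγ.eq_trans ?_ (hγ.trans_eq this ?_)
        · rw [← mul_assoc, ← pow_add]; congr 2; omega
        · rw [← mul_assoc, ← pow_add]; congr 2; omega
      refine hγ.trans_eq h1 ?_
      have harith : f 0 + n * D = e 0 + (n + 1) * D := by
        rw [add_mul, one_mul]; omega
      rw [harith]
  set M := e 0 + s * D with hM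
  have hMs : s ≤ M := by
    have hD1 : 1 ≤ D := by omega
    have h2 : s * 1 ≤ s * D := Nat.mul_le_mul_left s hD1
    omega
  have hcol := collectHigh hγ hcen hthr hMs r e hbe
  have hpow : γ (wx ^ (e 0 + NS r e)) (wx ^ (f 0 + NS r f)) := gamma_pow hγ hUV
  have hNS : NS r f = NS r e := NS_congr (fun i h1 h2 => (hprof i h1 h2).symm)
  rw [hNS] at hpow
  have hlt : e 0 + NS r e < f 0 + NS r e := by omega
  have thr' := thr_improve hγ hthr hpow hlt
  have hfinal : γ (wx ^ (M + NS r e) * TT r) (wx ^ (e 0 + NS r e) * TT r) := by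
    refine hγ.mulr (thr' _ _ ?_ ?_) _
    · have : e 0 ≤ M := by omega
      omega
    · omega
  exact hγ.eq_trans (wordE_eq r e) (hγ.trans (hpump s) (hγ.trans hcol hfinal))

end Gamma2



/-! ### The degenerate family and the main collection theorem -/

/-- canonical pattern `x^c t₁ x (tail)`. -/
def eD (c : ℕ) (g : ℕ → ℕ) : ℕ → ℕ := fun j => if j = 0 then c else if j = 1 then 1 else g j

/-- canonical pattern `x^{c+1} t₁ (tail)`. -/
def fD (c : ℕ) (g : ℕ → ℕ) : ℕ → ℕ := fun j => if j = 0 then c + 1 else if j = 1 then 0 else g j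

theorem NS_eD_fD (c : ℕ) (g : ℕ → ℕ) : ∀ r, 1 ≤ r → NS r (eD c g) = NS r (fD c g) + 1 := by
  intro r
  induction r with
  | zero => omega
  | succ rr ih =>
    intro _
    rcases Nat.eq_zero_or_pos rr with h | h
    · subst h
      simp [NS, eD, fD, Finset.sum_range_one]
    · rw [NS_succ, NS_succ, ih h]
      have heq : eD c g (rr + 1) = fD c g (rr + 1) := by
        simp only [eD, fD]
        split_ifs <;> first | rfl | omega | (congr 1 <;> omega) | simp_all
      omega

section Gamma3

variable {γ : Word → Word → Prop}

set_option maxHeartbeats 1000000 in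
theorem caseDeg (hγ : IsFIC γ) (hcen : γ (wx ^ 2 * wy) (wy * wx ^ 2)) :
    ∀ r, 1 ≤ r → ∀ (c : ℕ) (g : ℕ → ℕ), (∀ i, 2 ≤ i → i ≤ r → g i ≤ 1) →
    γ (wordE r (eD c g)) (wordE r (fD c g)) →
    γ (wordE r (eD c g)) (wx ^ (eD c g 0 + NS r (eD c g)) * TT r) ∧
    γ (wordE r (fD c g)) (wx ^ (fD c g 0 + NS r (fD c g)) * TT r) := by
  intro r
  induction r with
  | zero => omega
  | succ rr ih =>
    intro _ c g hb hUV
    rcases Nat.eq_zero_or_pos rr with hrr | hrr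
    · -- base case r = 1
      subst hrr
      have h0 : fD c g 1 = 0 := by simp [fD]
      have h1 : NS 1 (fD c g) = 0 := by
        simp [NS, Finset.sum_range_one, h0]
      have hfd : wordE 1 (fD c g) = wx ^ (fD c g 0 + NS 1 (fD c g)) * TT 1 := by
        rw [wordE_eq, tl_peel (le_refl 1), h0, h1]
        simp [tl, TT, List.range_succ]
      have hexp : eD c g 0 + NS 1 (eD c g) = fD c g 0 + NS 1 (fD c g) := by
        simp [NS, eD, fD, Finset.sum_range_one]
      refine ⟨?_, ?_⟩
      · rw [hexp]
        exact hγ.trans hUV (hγ.of_eq hfd)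
      · exact hγ.of_eq hfd
    · -- r = rr + 1 ≥ 2 : delete the letter t₂
      have hdel2 : γ (wordE rr (emrg 2 (eD c g))) (wordE rr (emrg 2 (fD c g))) := by
        have := deleteStep hγ (show 1 ≤ 2 by omega) (show 2 ≤ rr + 1 by omega) hUV
        rwa [show rr + 1 - 1 = rr by omega] at this
      have hg2b : g 2 ≤ 1 := hb 2 (by omega) (by omega)
      have hbsh : ∀ i, 2 ≤ i → i ≤ rr → (fun j => g (j + 1)) i ≤ 1 := by
        intro i h1 h2
        exact hb (i + 1) (by omega) (by omega)
      have hNSf : emrg 2 (fD c g) 0 + NS rr (emrg 2 (fD c g))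
          = fD c g 0 + NS (rr + 1) (fD c g) := by
        have := NS_emrg (fD c g) (show 1 ≤ 2 by omega) (rr - 1)
        rw [show 2 + (rr - 1) = rr + 1 by omega, show rr + 1 - 1 = rr by omega] at this
        exact this
      have hexpEF : eD c g 0 + NS (rr + 1) (eD c g) = fD c g 0 + NS (rr + 1) (fD c g) := by
        have h1 := NS_eD_fD c g (rr + 1) (by omega)
        have h2 : eD c g 0 = c := by simp [eD]
        have h3 : fD c g 0 = c + 1 := by simp [fD]
        omega
      rcases Nat.lt_or_ge (g 2) 1 with hg2' | hg2'
      · -- g 2 = 0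
        have hg2 : g 2 = 0 := by omega
        have hce : wordE rr (emrg 2 (eD c g)) = wordE rr (eD c (fun j => g (j + 1))) := by
          refine wordE_congr (fun k hk => ?_)
          rcases k with _ | _ | k
          all_goals simp only [emrg, eD]
          all_goals split_ifs <;> first | rfl | omega | (congr 1 <;> omega) | simp_all
        have hcf : wordE rr (emrg 2 (fD c g)) = wordE rr (fD c (fun j => g (j + 1))) := by
          refine wordE_congr (fun k hk => ?_)
          rcases k with _ | _ | k
          all_goals simp only [emrg, fD]
          all_goals split_ifs <;> first | rfl | omega | (congr 1 <;> omega) | simp_all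
        have hPair : γ (wordE rr (eD c (fun j => g (j + 1))))
            (wordE rr (fD c (fun j => g (j + 1)))) := by
          rw [← hce, ← hcf]; exact hdel2
        obtain ⟨ce, cf⟩ := ih hrr c (fun j => g (j + 1)) hbsh hPair
        have hcol : γ (wordE rr (emrg 2 (fD c g)))
            (wx ^ (fD c (fun j => g (j + 1)) 0 + NS rr (fD c (fun j => g (j + 1)))) * TT rr) := by
          rw [hcf]; exact cf
        have hXeq : fD c (fun j => g (j + 1)) 0 + NS rr (fD c (fun j => g (j + 1)))
            = fD c g 0 + NS (rr + 1) (fD c g) := by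
          have h2 : NS rr (fD c (fun j => g (j + 1))) = NS rr (emrg 2 (fD c g)) := by
            refine NS_congr (fun m hm1 hm2 => ?_)
            rcases m with _ | _ | m
            all_goals simp only [emrg, fD]
            all_goals split_ifs <;> first | rfl | omega | (congr 1 <;> omega) | simp_all
          have h3 : fD c (fun j => g (j + 1)) 0 = emrg 2 (fD c g) 0 := by
            simp [emrg, fD]
          rw [h3, h2]
          exact hNSf
        have collV : γ (wordE (rr + 1) (fD c g))
            (wx ^ (fD c g 0 + NS (rr + 1) (fD c g)) * TT (rr + 1)) := by
          have := reconstruct hγ (show 1 ≤ 2 by omega) (show 2 ≤ rr + 1 by omega)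
            (show fD c g 2 = 0 by simp [fD, hg2])
            (by rw [show rr + 1 - 1 = rr by omega]; exact hcol)
          rwa [hXeq] at this
        refine ⟨?_, collV⟩
        rw [hexpEF]
        exact hγ.trans hUV collV
      · -- g 2 = 1 : orientation swaps after surgery
        have hg2 : g 2 = 1 := by omega
        have hslot : emrg 2 (eD c g) 1 = 2 := by
          simp [emrg, eD, hg2]
        have hred := red2 hγ hcen (show 1 ≤ 1 by omega) hrr hslot
        have hcf2 : wordE rr (emrg 2 (fD c g))
            = wordE rr (eD (c + 1) (fun j => g (j + 1))) := by
          refine wordE_congr (fun k hk => ?_)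
          rcases k with _ | _ | k
          all_goals simp only [emrg, fD, eD]
          all_goals split_ifs <;> first | rfl | omega | (congr 1 <;> omega) | simp_all
        have hce2 : wordE rr (gred 1 (emrg 2 (eD c g)))
            = wordE rr (fD (c + 1) (fun j => g (j + 1))) := by
          refine wordE_congr (fun k hk => ?_)
          rcases k with _ | _ | k
          all_goals simp only [gred, emrg, eD, fD]
          all_goals split_ifs <;> first | rfl | omega | (congr 1 <;> omega) | simp_all
        have hPair : γ (wordE rr (eD (c + 1) (fun j => g (j + 1))))
            (wordE rr (fD (c + 1) (fun j => g (j + 1)))) := by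
          rw [← hcf2, ← hce2]
          exact hγ.trans (hγ.symm hdel2) hred
        obtain ⟨ce, cf⟩ := ih hrr (c + 1) (fun j => g (j + 1)) hbsh hPair
        have hfD1 : fD c g 1 = 0 := by simp [fD]
        have hc3 : wordE rr (emrg 1 (fD c g))
            = wordE rr (eD (c + 1) (fun j => g (j + 1))) := by
          refine wordE_congr (fun k hk => ?_)
          rcases k with _ | _ | k
          all_goals simp only [emrg, fD, eD]
          all_goals split_ifs <;> first | rfl | omega | (congr 1 <;> omega) | simp_all
        have hcol : γ (wordE rr (emrg 1 (fD c g)))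
            (wx ^ (eD (c + 1) (fun j => g (j + 1)) 0
              + NS rr (eD (c + 1) (fun j => g (j + 1)))) * TT rr) := by
          rw [hc3]; exact ce
        have hXeq : eD (c + 1) (fun j => g (j + 1)) 0
              + NS rr (eD (c + 1) (fun j => g (j + 1)))
            = fD c g 0 + NS (rr + 1) (fD c g) := by
          have hNS1 : emrg 1 (fD c g) 0 + NS rr (emrg 1 (fD c g))
              = fD c g 0 + NS (rr + 1) (fD c g) := by
            have := NS_emrg (fD c g) (show (1:ℕ) ≤ 1 by omega) rr
            rw [show 1 + rr = rr + 1 by omega, show rr + 1 - 1 = rr by omega] at this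
            exact this
          have h2 : NS rr (eD (c + 1) (fun j => g (j + 1))) = NS rr (emrg 1 (fD c g)) := by
            refine NS_congr (fun m hm1 hm2 => ?_)
            rcases m with _ | _ | m
            all_goals simp only [emrg, eD, fD]
            all_goals split_ifs <;> first | rfl | omega | (congr 1 <;> omega) | simp_all
          have h3 : eD (c + 1) (fun j => g (j + 1)) 0 = emrg 1 (fD c g) 0 := by
            simp [emrg, eD, fD]
          rw [h3, h2]
          exact hNS1
        have collV : γ (wordE (rr + 1) (fD c g))
            (wx ^ (fD c g 0 + NS (rr + 1) (fD c g)) * TT (rr + 1)) := by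
          have := reconstruct hγ (show (1:ℕ) ≤ 1 by omega) (show 1 ≤ rr + 1 by omega)
            hfD1 (by rw [show rr + 1 - 1 = rr by omega]; exact hcol)
          rwa [hXeq] at this
        refine ⟨?_, collV⟩
        rw [hexpEF]
        exact hγ.trans hUV collV

end Gamma3



section Gamma4

variable {γ : Word → Word → Prop}

set_option maxHeartbeats 1000000 in
/-- Core of the induction step: the first differing profile position `i` has
`e i = 1`, `f i = 0`. -/
theorem mainCore (hγ : IsFIC γ) (hcen : γ (wx ^ 2 * wy) (wy * wx ^ 2)) {s : ℕ}
    (hthr : Thr γ s) (rr : ℕ)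
    (ih : ∀ e f : ℕ → ℕ, (∀ i, 1 ≤ i → i ≤ rr → e i ≤ 1) →
      (∀ i, 1 ≤ i → i ≤ rr → f i ≤ 1) →
      (∃ i, i ≤ rr ∧ e i ≠ f i) → γ (wordE rr e) (wordE rr f) →
      γ (wordE rr e) (wx ^ (e 0 + NS rr e) * TT rr) ∧
      γ (wordE rr f) (wx ^ (f 0 + NS rr f) * TT rr))
    (e f : ℕ → ℕ)
    (hbe : ∀ i, 1 ≤ i → i ≤ rr + 1 → e i ≤ 1) (hbf : ∀ i, 1 ≤ i → i ≤ rr + 1 → f i ≤ 1)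
    (i : ℕ) (hi1 : 1 ≤ i) (hir : i ≤ rr + 1)
    (hmin : ∀ j, 1 ≤ j → j < i → e j = f j) (hei : e i = 1) (hfi : f i = 0)
    (hUV : γ (wordE (rr + 1) e) (wordE (rr + 1) f)) :
    γ (wordE (rr + 1) e) (wx ^ (e 0 + NS (rr + 1) e) * TT (rr + 1)) ∧
    γ (wordE (rr + 1) f) (wx ^ (f 0 + NS (rr + 1) f) * TT (rr + 1)) := by
  have hdel : γ (wordE rr (emrg i e)) (wordE rr (emrg i f)) := by
    have := deleteStep hγ hi1 hir hUV
    rwa [show rr + 1 - 1 = rr by omega] at this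
  have hNSf : emrg i f 0 + NS rr (emrg i f) = f 0 + NS (rr + 1) f := by
    have := NS_emrg f hi1 (rr + 1 - i)
    rwa [show i + (rr + 1 - i) = rr + 1 by omega, show rr + 1 - 1 = rr by omega] at this
  have hbf' : ∀ k, 1 ≤ k → k ≤ rr → emrg i f k ≤ 1 := by
    intro k h1 h2
    unfold emrg
    split_ifs with hc1 hc2
    · exact hbf k h1 (by omega)
    · have := hbf (i - 1) (by omega) (by omega)
      rw [show k = i - 1 by omega]
      omega
    · exact hbf (k + 1) (by omega) (by omega)
  -- finish: given the collected form of the f-side, conclude both collections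
  have finish : γ (wordE (rr + 1) f) (wx ^ (f 0 + NS (rr + 1) f) * TT (rr + 1)) →
      γ (wordE (rr + 1) e) (wx ^ (e 0 + NS (rr + 1) e) * TT (rr + 1)) ∧
      γ (wordE (rr + 1) f) (wx ^ (f 0 + NS (rr + 1) f) * TT (rr + 1)) := by
    intro collV
    refine ⟨?_, collV⟩
    exact collTransfer hγ hthr (hγ.symm hUV) collV (gamma_pow hγ (hγ.symm hUV))
  by_cases hdeg : i = 1 ∧ f 0 = e 0 + 1 ∧ ∀ j, 2 ≤ j → j ≤ rr + 1 → e j = f j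
  · -- degenerate family
    obtain ⟨hieq, hf0, hjs⟩ := hdeg
    subst hieq
    have hcanE : wordE (rr + 1) e = wordE (rr + 1) (eD (e 0) e) := by
      refine wordE_congr (fun k hk => ?_)
      rcases k with _ | _ | k
      · simp [eD]
      · simp [eD, hei]
      · simp [eD]
    have hcanF : wordE (rr + 1) f = wordE (rr + 1) (fD (e 0) e) := by
      refine wordE_congr (fun k hk => ?_)
      rcases k with _ | _ | k
      · simp [fD, hf0]
      · simp [fD, hfi]
      · simp [fD]
        exact (hjs (k + 2) (by omega) (by omega)).symm
    have hNSe : NS (rr + 1) e = NS (rr + 1) (eD (e 0) e) := by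
      refine NS_congr (fun k h1 h2 => ?_)
      rcases k with _ | _ | k
      · omega
      · simp [eD, hei]
      · simp [eD]
    have hNSf2 : NS (rr + 1) f = NS (rr + 1) (fD (e 0) e) := by
      refine NS_congr (fun k h1 h2 => ?_)
      rcases k with _ | _ | k
      · omega
      · simp [fD, hfi]
      · simp [fD]
        exact (hjs (k + 2) (by omega) (by omega)).symm
    have hbg : ∀ j, 2 ≤ j → j ≤ rr + 1 → e j ≤ 1 := fun j h1 h2 => hbe j (by omega) h2
    have hUV' : γ (wordE (rr + 1) (eD (e 0) e)) (wordE (rr + 1) (fD (e 0) e)) := by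
      rw [← hcanE, ← hcanF]; exact hUV
    obtain ⟨ce, cf⟩ := caseDeg hγ hcen (rr + 1) (by omega) (e 0) e hbg hUV'
    constructor
    · rw [hcanE, show e 0 + NS (rr + 1) e = eD (e 0) e 0 + NS (rr + 1) (eD (e 0) e) by
        simp [eD]; omega]
      exact ce
    · rw [hcanF, show f 0 + NS (rr + 1) f = fD (e 0) e 0 + NS (rr + 1) (fD (e 0) e) by
        simp [fD]; omega]
      exact cf
  · -- non-degenerate: delete the letter t_i and recurse
    rcases Nat.lt_or_ge 1 i with hi2 | hi1'
    · -- i ≥ 2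
      have hbei1 := hbe (i - 1) (by omega) (by omega)
      have hmin1 : e (i - 1) = f (i - 1) := hmin (i - 1) (by omega) (by omega)
      rcases Nat.lt_or_ge (e (i - 1)) 1 with h0 | h1
      · -- e (i-1) = 0
        have he1 : e (i - 1) = 0 := by omega
        have hne' : ∃ k, k ≤ rr ∧ emrg i e k ≠ emrg i f k := by
          refine ⟨i - 1, by omega, ?_⟩
          unfold emrg
          rw [if_neg (by omega), if_pos (by omega), if_neg (by omega), if_pos (by omega)]
          omega
        have hbe' : ∀ k, 1 ≤ k → k ≤ rr → emrg i e k ≤ 1 := by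
          intro k hk1 hk2
          unfold emrg
          split_ifs with hc1 hc2
          · exact hbe k hk1 (by omega)
          · rw [show k = i - 1 by omega]
            omega
          · exact hbe (k + 1) (by omega) (by omega)
        obtain ⟨_, cf'⟩ := ih (emrg i e) (emrg i f) hbe' hbf' hne' hdel
        refine finish ?_
        have := reconstruct hγ hi1 hir hfi
          (by rw [show rr + 1 - 1 = rr by omega]; exact cf')
        rwa [hNSf] at this
      · -- e (i-1) = 1 : reduce the double exponent
        have he1 : e (i - 1) = 1 := by omega
        have hslot : emrg i e (i - 1) = 2 := by
          unfold emrg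
          rw [if_neg (by omega), if_pos (by omega)]
          omega
        have hred := red2 hγ hcen (show 1 ≤ i - 1 by omega) (show i - 1 ≤ rr by omega) hslot
        have hPair : γ (wordE rr (gred (i - 1) (emrg i e))) (wordE rr (emrg i f)) :=
          hγ.trans (hγ.symm hred) hdel
        have hne' : ∃ k, k ≤ rr ∧ gred (i - 1) (emrg i e) k ≠ emrg i f k := by
          refine ⟨i - 1, by omega, ?_⟩
          unfold gred emrg
          rw [if_neg (by omega), if_pos rfl, if_neg (by omega), if_pos (by omega)]
          omega
        have hbe' : ∀ k, 1 ≤ k → k ≤ rr → gred (i - 1) (emrg i e) k ≤ 1 := by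
          intro k hk1 hk2
          unfold gred emrg
          split_ifs with hc1 hc2 hc3 hc4
          · omega
          · omega
          · exact hbe k hk1 (by omega)
          · omega
          · exact hbe (k + 1) (by omega) (by omega)
        obtain ⟨_, cf'⟩ := ih (gred (i - 1) (emrg i e)) (emrg i f) hbe' hbf' hne' hPair
        refine finish ?_
        have := reconstruct hγ hi1 hir hfi
          (by rw [show rr + 1 - 1 = rr by omega]; exact cf')
        rwa [hNSf] at this
    · -- i = 1
      have hieq : i = 1 := by omega
      subst hieq
      have hbe' : ∀ k, 1 ≤ k → k ≤ rr → emrg 1 e k ≤ 1 := by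
        intro k hk1 hk2
        unfold emrg
        rw [if_neg (by omega), if_neg (by omega)]
        exact hbe (k + 1) (by omega) (by omega)
      have hne' : ∃ k, k ≤ rr ∧ emrg 1 e k ≠ emrg 1 f k := by
        by_cases hfront : e 0 + 1 = f 0
        · -- fronts agree after merging; a later slot must differ
          have hlater : ∃ j, 2 ≤ j ∧ j ≤ rr + 1 ∧ e j ≠ f j := by
            by_contra hno
            push_neg at hno
            exact hdeg ⟨rfl, hfront.symm, fun j h1 h2 => hno j h1 h2⟩
          obtain ⟨j, hj2, hjr, hjne⟩ := hlater
          refine ⟨j - 1, by omega, ?_⟩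
          unfold emrg
          rw [if_neg (by omega), if_neg (by omega), if_neg (by omega), if_neg (by omega),
            show j - 1 + 1 = j by omega]
          exact hjne
        · refine ⟨0, by omega, ?_⟩
          unfold emrg
          norm_num
          omega
      obtain ⟨_, cf'⟩ := ih (emrg 1 e) (emrg 1 f) hbe' hbf' hne' hdel
      refine finish ?_
      have := reconstruct hγ (r := rr + 1) (i := 1) (le_refl 1) (by omega) hfi
        (by rw [show rr + 1 - 1 = rr by omega]; exact cf')
      rwa [hNSf] at this

/-- **Main collection theorem**: a nontrivial identity of the standard shape,
together with `x²y ≈ yx²` and aperiodicity, collects both of its sides. -/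
theorem collectMain (hγ : IsFIC γ) (hcen : γ (wx ^ 2 * wy) (wy * wx ^ 2)) {s : ℕ}
    (hthr : Thr γ s) :
    ∀ r (e f : ℕ → ℕ), (∀ i, 1 ≤ i → i ≤ r → e i ≤ 1) → (∀ i, 1 ≤ i → i ≤ r → f i ≤ 1) →
    (∃ i, i ≤ r ∧ e i ≠ f i) → γ (wordE r e) (wordE r f) →
    γ (wordE r e) (wx ^ (e 0 + NS r e) * TT r) ∧
    γ (wordE r f) (wx ^ (f 0 + NS r f) * TT r) := by
  intro r
  induction r with
  | zero =>
    intro e f _ _ _ _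
    constructor <;> exact hγ.of_eq (by simp [wordE_eq, tl, TT, NS])
  | succ rr ih =>
    intro e f hbe hbf hne hUV
    by_cases hex : ∃ j, 1 ≤ j ∧ j ≤ rr + 1 ∧ e j ≠ f j
    · classical
      have hi1 := (Nat.find_spec hex).1
      have hir := (Nat.find_spec hex).2.1
      have hine := (Nat.find_spec hex).2.2
      set i := Nat.find hex with hidef
      have hmin : ∀ j, 1 ≤ j → j < i → e j = f j := by
        intro j hj1 hji
        by_contra hne'
        exact (Nat.find_min hex hji) ⟨hj1, by omega, hne'⟩
      have hbei := hbe i hi1 hir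
      have hbfi := hbf i hi1 hir
      rcases Nat.lt_or_ge (e i) 1 with h0 | h1
      · have hei : f i = 1 := by omega
        have hfi : e i = 0 := by omega
        have := mainCore hγ hcen hthr rr
          (fun e' f' b1 b2 hne' hp => ih e' f' b1 b2 hne' hp)
          f e hbf hbe i hi1 hir (fun j a b => (hmin j a b).symm) hei hfi (hγ.symm hUV)
        exact ⟨this.2, this.1⟩
      · have hei : e i = 1 := by omega
        have hfi : f i = 0 := by omega
        exact mainCore hγ hcen hthr rr
          (fun e' f' b1 b2 hne' hp => ih e' f' b1 b2 hne' hp)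
          e f hbe hbf i hi1 hir hmin hei hfi hUV
    · push_neg at hex
      have hprof : ∀ j, 1 ≤ j → j ≤ rr + 1 → e j = f j := fun j a b => hex j a b
      have h0 : e 0 ≠ f 0 := by
        obtain ⟨j, hjr, hjne⟩ := hne
        rcases Nat.eq_zero_or_pos j with h | h
        · subst h; exact hjne
        · exact absurd (hprof j h hjr) hjne
      rcases Nat.lt_or_ge (e 0) (f 0) with hlt | hge
      · have collU := caseA hγ hcen hthr hbe hlt hprof hUV
        have collV := collTransfer hγ hthr hUV collU (gamma_pow hγ hUV)
        exact ⟨collU, collV⟩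
      · have hlt : f 0 < e 0 := by omega
        have collV := caseA hγ hcen hthr hbf hlt
          (fun j a b => (hprof j a b).symm) (hγ.symm hUV)
        have collU := collTransfer hγ hthr (hγ.symm hUV) collV (gamma_pow hγ (hγ.symm hUV))
        exact ⟨collU, collV⟩

end Gamma4



/-! ### Final assembly -/

theorem sum_eq_NS (r : ℕ) (e : ℕ → ℕ) :
    ∑ i ∈ Finset.range (r + 1), e i = e 0 + NS r e := by
  rw [Finset.sum_range_succ']
  exact Nat.add_comm _ _

section Assembly

variable {γ : Word → Word → Prop}

/-- From the collection of a side, derive its δ-identity by the ranking substitution. -/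
theorem delta_from_coll (hγ : IsFIC γ) {r : ℕ} {e : ℕ → ℕ}
    (hb : ∀ i, 1 ≤ i → i ≤ r → e i ≤ 1)
    (hcoll : γ (wordE r e) (wx ^ (e 0 + NS r e) * TT r)) :
    γ (deltaL (NS r e) (e 0)) (deltaR (NS r e) (e 0)) := by
  have h := hγ.subst (subE (hrk e)) hcoll
  rw [subE_wordE, tl_rank e hb, map_mul, map_pow, subE_wx, subE_TT', Tp_rank e hb] at h
  rw [deltaL_eq, deltaR_eq, TT_eq_Tp]
  exact h

/-- A pattern word is γ-related to its collected form, given the δ-generator. -/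
theorem coll_from_delta (hγ : IsFIC γ) {r : ℕ} {e : ℕ → ℕ}
    (hb : ∀ i, 1 ≤ i → i ≤ r → e i ≤ 1)
    (hδ : γ (deltaL (NS r e) (e 0)) (deltaR (NS r e) (e 0))) :
    γ (wordE r e) (wx ^ (e 0 + NS r e) * TT r) := by
  obtain ⟨g, B, hg1, hg2⟩ := blocks r e hb
  have h := hγ.mulr (hγ.subst (subE g) hδ) B
  rw [subE_deltaL, subE_deltaR] at h
  rw [hg1] at h
  refine hγ.trans_eq h ?_
  rw [mul_assoc]
  show wx ^ (e 0 + NS r e) * (Tp (NS r e) g * B) = _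
  rw [hg2]

end Assembly


/-- Let `θ` be a fully invariant congruence containing `x²y ≈ yx²` and
`x^s ≈ x^{s+1}` for some `s ∈ ℕ`, and let all exponents `e_i, f_i` (`1 ≤ i ≤ r`) be at
most 1. If the two sides of the identity `x^{e₀}∏(t_i x^{e_i}) ≈ x^{f₀}∏(t_i x^{f_i})`
are distinct then adjoining this identity to `θ` is the same as adjoining
`{x^e ≈ x^f, δ_{e-e₀,e₀}, δ_{f-f₀,f₀}}`. -/
theorem statement_12 (θ : Word → Word → Prop) (hθ : IsFIC θ)
    (hA : θ (wx ^ 2 * wy) (wy * wx ^ 2))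
    (hap : ∃ s : ℕ, 1 ≤ s ∧ θ (wx ^ s) (wx ^ (s + 1)))
    (r : ℕ) (e f : ℕ → ℕ)
    (he : ∀ i, 1 ≤ i → i ≤ r → e i ≤ 1) (hf : ∀ i, 1 ≤ i → i ≤ r → f i ≤ 1)
    (hne : wordE r e ≠ wordE r f) :
    ∀ u v : Word,
      ficJoin θ (ficGen fun a b => a = wordE r e ∧ b = wordE r f) u v ↔
      ficJoin θ (ficGen fun a b =>
        (a = wx ^ (∑ i ∈ Finset.range (r + 1), e i) ∧
          b = wx ^ (∑ i ∈ Finset.range (r + 1), f i)) ∨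
        (a = deltaL ((∑ i ∈ Finset.range (r + 1), e i) - e 0) (e 0) ∧
          b = deltaR ((∑ i ∈ Finset.range (r + 1), e i) - e 0) (e 0)) ∨
        (a = deltaL ((∑ i ∈ Finset.range (r + 1), f i) - f 0) (f 0) ∧
          b = deltaR ((∑ i ∈ Finset.range (r + 1), f i) - f 0) (f 0))) u v := by
  obtain ⟨s, hs1, hsθ⟩ := hap
  have hsum_e : ∑ i ∈ Finset.range (r + 1), e i = e 0 + NS r e := sum_eq_NS r e
  have hsum_f : ∑ i ∈ Finset.range (r + 1), f i = f 0 + NS r f := sum_eq_NS r f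
  have hsub_e : (∑ i ∈ Finset.range (r + 1), e i) - e 0 = NS r e := by omega
  have hsub_f : (∑ i ∈ Finset.range (r + 1), f i) - f 0 = NS r f := by omega
  have hne' : ∃ i, i ≤ r ∧ e i ≠ f i := by
    by_contra h
    push_neg at h
    exact hne (wordE_congr (fun i hi => h i hi))
  intro u v
  rw [ficJoin_gen_iff, ficJoin_gen_iff]
  refine ficGen_iff_of_le ?_ ?_ u v
  · -- the single identity follows from the three identities (together with θ)
    intro a b hab
    set γ₂ := ficGen (fun a b => θ a b ∨
      ((a = wx ^ (∑ i ∈ Finset.range (r + 1), e i) ∧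
          b = wx ^ (∑ i ∈ Finset.range (r + 1), f i)) ∨
        (a = deltaL ((∑ i ∈ Finset.range (r + 1), e i) - e 0) (e 0) ∧
          b = deltaR ((∑ i ∈ Finset.range (r + 1), e i) - e 0) (e 0)) ∨
        (a = deltaL ((∑ i ∈ Finset.range (r + 1), f i) - f 0) (f 0) ∧
          b = deltaR ((∑ i ∈ Finset.range (r + 1), f i) - f 0) (f 0)))) with hγ₂def
    have hγ₂ : IsFIC γ₂ := isFIC_ficGen _
    rcases hab with h | ⟨ha, hb⟩
    · exact relLe_ficGen _ a b (Or.inl h)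
    · subst ha; subst hb
      have hδe : γ₂ (deltaL (NS r e) (e 0)) (deltaR (NS r e) (e 0)) := by
        have h1 : γ₂ (deltaL ((∑ i ∈ Finset.range (r + 1), e i) - e 0) (e 0))
            (deltaR ((∑ i ∈ Finset.range (r + 1), e i) - e 0) (e 0)) :=
          relLe_ficGen _ _ _ (Or.inr (Or.inr (Or.inl ⟨rfl, rfl⟩)))
        rwa [hsub_e] at h1
      have hδf : γ₂ (deltaL (NS r f) (f 0)) (deltaR (NS r f) (f 0)) := by
        have h1 : γ₂ (deltaL ((∑ i ∈ Finset.range (r + 1), f i) - f 0) (f 0))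
            (deltaR ((∑ i ∈ Finset.range (r + 1), f i) - f 0) (f 0)) :=
          relLe_ficGen _ _ _ (Or.inr (Or.inr (Or.inr ⟨rfl, rfl⟩)))
        rwa [hsub_f] at h1
      have hpow : γ₂ (wx ^ (e 0 + NS r e)) (wx ^ (f 0 + NS r f)) := by
        have : γ₂ (wx ^ (∑ i ∈ Finset.range (r + 1), e i))
            (wx ^ (∑ i ∈ Finset.range (r + 1), f i)) :=
          relLe_ficGen _ _ _ (Or.inr (Or.inl ⟨rfl, rfl⟩))
        rwa [hsum_e, hsum_f] at this
      have hce := coll_from_delta hγ₂ he hδe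
      have hcf := coll_from_delta hγ₂ hf hδf
      exact hγ₂.trans hce (hγ₂.trans (hγ₂.mulr hpow (TT r)) (hγ₂.symm hcf))
  · -- the three identities follow from the single one (together with θ)
    intro a b hab
    set γ₁ := ficGen (fun a b => θ a b ∨ (a = wordE r e ∧ b = wordE r f)) with hγ₁def
    have hγ₁ : IsFIC γ₁ := isFIC_ficGen _
    have hcen₁ : γ₁ (wx ^ 2 * wy) (wy * wx ^ 2) := relLe_ficGen _ _ _ (Or.inl hA)
    have hthr₁ : Thr γ₁ s := thr_of_step hγ₁ (relLe_ficGen _ _ _ (Or.inl hsθ))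
    have hUV₁ : γ₁ (wordE r e) (wordE r f) := relLe_ficGen _ _ _ (Or.inr ⟨rfl, rfl⟩)
    obtain ⟨collE, collF⟩ := collectMain hγ₁ hcen₁ hthr₁ r e f he hf hne' hUV₁
    rcases hab with h | ⟨ha, hb⟩ | ⟨ha, hb⟩ | ⟨ha, hb⟩
    · exact relLe_ficGen _ a b (Or.inl h)
    · subst ha; subst hb
      have := gamma_pow hγ₁ hUV₁
      rwa [← hsum_e, ← hsum_f] at this
    · subst ha; subst hb
      have := delta_from_coll hγ₁ he collE
      rwa [← hsub_e] at this
    · subst ha; subst hb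
      have := delta_from_coll hγ₁ hf collF
      rwa [← hsub_f] at this
end

section
/- The word xysxzytz is an isoterm for the join of the variety generated by the factor monoid M(xzxyty) and the variety N: if v is a word such that (xysxzytz, v) ∈ Th(M(xzxyty)) ∩ θ_N (i.e., the identity xysxzytz ≈ v holds both in M(xzxyty) and in every monoid of the variety N), then v = xysxzytz. -/
/-!
If `u ≈ v` holds in `M(w)` and a substitution sends `u` to a factor of `w`, it sends `v` to the
same factor. Deleting letters and renaming the rest, the projections `xsxztz` and `ysyt` of
`u = xysxzytz` are factors of `xzxyty` up to renaming, and the empty projection to a letter not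
in `u` is a factor too. So `v` arises from `xsxztz` by inserting one `y` before `s` and one
between `s` and `t`. Its projection to `y, z, t, s` cannot be `ysyztz`, which is again a factor up
to renaming but differs from `yszytz`. This leaves `u` and `yxsxzytz`. The syntactic monoid of
`{abcab, abcba}` lies in `N` and separates `abcab` from `bacab = 0`, so `N` does not identify
these two words.
-/

namespace Factor

variable {w : List ℕ}

def ofWord (w : List ℕ) : Word →* Factor w where
  toFun u := if h : u.toList <:+: w then some ⟨u.toList, h⟩ else none
  map_one' := dif_pos List.nil_infix
  map_mul' u v := by
    by_cases huv : u.toList ++ v.toList <:+: w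
    · have hu : u.toList <:+: w := (List.prefix_append _ _).isInfix.trans huv
      have hv : v.toList <:+: w := (List.suffix_append _ _).isInfix.trans huv
      simp [huv, hu, hv, some_mul_some]
    · simp only [FreeMonoid.toList_mul]
      simp_all [some_mul_some, none_mul, mul_none]

theorem ofWord_apply (u : Word) :
    ofWord w u = if h : u.toList <:+: w then some ⟨u.toList, h⟩ else none := rfl

theorem eq_of_ofWord_eq {u v : Word} (h : ofWord w u = ofWord w v) (hu : u.toList <:+: w) :
    u = v := by
  have hv : v.toList <:+: w := by
    by_contra hv
    simp [ofWord_apply, hu, hv] at h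
  simpa [ofWord_apply, hu, hv] using h

end Factor

theorem List.eq_of_map_eq_of_injOn {α β : Type*} {f : α → β} {S : List α}
    (hf : ∀ a ∈ S, ∀ b ∈ S, f a = f b → a = b) :
    ∀ {l₁ l₂ : List α}, (∀ a ∈ l₁, a ∈ S) → (∀ a ∈ l₂, a ∈ S) → l₁.map f = l₂.map f → l₁ = l₂
  | [], [], _, _, _ => rfl
  | a :: l₁, b :: l₂, h₁, h₂, h => by
    simp only [List.map_cons, List.cons.injEq] at h
    simp only [List.mem_cons, forall_eq_or_imp] at h₁ h₂
    rw [hf a h₁.1 b h₂.1 h.1, eq_of_map_eq_of_injOn hf h₁.2 h₂.2 h.2]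

def restrictRename (S : List ℕ) (f : ℕ → ℕ) : Word →* Word :=
  FreeMonoid.lift fun a => if a ∈ S then FreeMonoid.of (f a) else 1

theorem toList_restrictRename (S : List ℕ) (f : ℕ → ℕ) (u : Word) :
    (restrictRename S f u).toList = (u.toList.filter (· ∈ S)).map f := by
  induction u using FreeMonoid.inductionOn' with
  | one => rfl
  | of_mul a u ih =>
    rw [map_mul, FreeMonoid.toList_mul, ih, restrictRename, FreeMonoid.lift_eval_of]
    by_cases ha : a ∈ S <;> simp [ha]

theorem ThFM.symm {w : List ℕ} {u v : Word} (h : ThFM w u v) : ThFM w v u :=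
  fun f => (h f).symm

theorem ThFM.filter_eq {w : List ℕ} {u v : Word} (h : ThFM w u v) (S : List ℕ) (f : ℕ → ℕ)
    (hf : ∀ a ∈ S, ∀ b ∈ S, f a = f b → a = b)
    (hu : (u.toList.filter (· ∈ S)).map f <:+: w) :
    u.toList.filter (· ∈ S) = v.toList.filter (· ∈ S) := by
  have := Factor.eq_of_ofWord_eq (h ((Factor.ofWord w).comp (restrictRename S f)))
    (by rwa [toList_restrictRename])
  replace := congrArg FreeMonoid.toList this
  rw [toList_restrictRename, toList_restrictRename] at this
  exact List.eq_of_map_eq_of_injOn hf (by simp) (by simp) this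

theorem isFIC_MSat (M : Type) [Monoid M] : IsFIC (MSat M) where
  refl _ _ := rfl
  symm h f := (h f).symm
  trans h₁ h₂ f := (h₁ f).trans (h₂ f)
  mul h₁ h₂ f := by rw [map_mul, map_mul, h₁ f, h₂ f]
  subst σ _ _ h f := h (f.comp σ)

theorem MSat.of_thetaN {M : Type} [Monoid M] (hM : RelLe SigmaN (MSat M)) {u v : Word}
    (h : thetaN u v) : MSat M u v :=
  h _ (isFIC_MSat M) hM

theorem sigmaN_le_MSat {M : Type} [Monoid M] (h₁ : ∀ x : M, x ^ 2 = x ^ 3)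
    (h₂ : ∀ x y : M, x ^ 2 * y = y * x ^ 2)
    (h₃ : ∀ x y z : M, x * y * x * z * x = x ^ 2 * y * z)
    (hα : ∀ x z y t : M, x * z * y * t * x * y = x * z * y * t * y * x)
    (hβ : ∀ x z y t : M, x * z * x * y * t * y = x * z * y * x * t * y) :
    RelLe SigmaN (MSat M) := by
  rintro u v (⟨rfl, rfl⟩ | ⟨rfl, rfl⟩ | ⟨rfl, rfl⟩ | ⟨rfl, rfl⟩ | ⟨rfl, rfl⟩) f <;>
    simp only [idAlphaL, idAlphaR, idBetaL, idBetaR, map_mul, map_pow]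
  exacts [h₁ _, h₂ _ _, h₃ _ _ _, hα _ _ _ _, hβ _ _ _ _]

/-- The syntactic monoid of the language `{abcab, abcba}`: the factors of these two words,
with `cba = cab`, `bcba = bcab` and `abcba = abcab`, and a zero. -/
inductive Syn
  | one | a | b | c | ab | ba | bc | ca | cb | abc | bca | bcb | cab | abca | abcb | bcab | abcab
  | zero
  deriving DecidableEq

namespace Syn

instance : Fintype Syn :=
  ⟨⟨[one, a, b, c, ab, ba, bc, ca, cb, abc, bca, bcb, cab, abca, abcb, bcab, abcab, zero],
    by decide⟩, fun x => by cases x <;> decide⟩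

def word : Syn → List Syn
  | one => [] | a => [a] | b => [b] | c => [c] | ab => [a, b] | ba => [b, a] | bc => [b, c]
  | ca => [c, a] | cb => [c, b] | abc => [a, b, c] | bca => [b, c, a] | bcb => [b, c, b]
  | cab => [c, a, b] | abca => [a, b, c, a] | abcb => [a, b, c, b] | bcab => [b, c, a, b]
  | abcab => [a, b, c, a, b] | zero => [zero]

def reduce : List Syn → Syn
  | [] => one | [a] => a | [b] => b | [c] => c | [a, b] => ab | [b, a] => ba | [b, c] => bc
  | [c, a] => ca | [c, b] => cb | [a, b, c] => abc | [b, c, a] => bca | [b, c, b] => bcb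
  | [c, a, b] | [c, b, a] => cab | [a, b, c, a] => abca | [a, b, c, b] => abcb
  | [b, c, a, b] | [b, c, b, a] => bcab | [a, b, c, a, b] | [a, b, c, b, a] => abcab
  | _ => zero

instance : Mul Syn := ⟨fun x y => reduce (word x ++ word y)⟩

instance : Monoid Syn where
  one := one
  mul_assoc := by decide
  one_mul := by decide
  mul_one := by decide

theorem zero_mul (x : Syn) : zero * x = zero := by cases x <;> rfl

theorem mul_zero (x : Syn) : x * zero = zero := by cases x <;> rfl

theorem mul_self_eq_zero : ∀ x : Syn, x ≠ 1 → x * x = zero := by decide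

theorem mul_mul_self_eq_zero : ∀ x : Syn, x ∉ [1, a, b, ab] → ∀ w, x * w * x = zero := by
  decide

theorem pow_two_eq_pow_three (x : Syn) : x ^ 2 = x ^ 3 := by
  by_cases hx : x = 1
  · simp [hx]
  · rw [pow_succ x 2, pow_two, mul_self_eq_zero x hx, zero_mul]

theorem pow_two_mul_comm (x y : Syn) : x ^ 2 * y = y * x ^ 2 := by
  by_cases hx : x = 1
  · simp [hx]
  · rw [pow_two, mul_self_eq_zero x hx, zero_mul, mul_zero]

theorem mul_mul_mul_mul_self_eq_pow_two_mul_mul :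
    ∀ x y z : Syn, x * y * x * z * x = x ^ 2 * y * z := by
  decide

theorem alpha_of_mem : ∀ x ∈ [1, a, b, ab], ∀ y ∈ [1, a, b, ab], ∀ z t : Syn,
    x * z * y * t * x * y = x * z * y * t * y * x := by decide

theorem beta_of_mem : ∀ x ∈ [1, a, b, ab], ∀ y ∈ [1, a, b, ab], ∀ z t : Syn,
    x * z * x * y * t * y = x * z * y * x * t * y := by decide

theorem alpha (x z y t : Syn) : x * z * y * t * x * y = x * z * y * t * y * x := by
  by_cases hx : x ∈ [1, a, b, ab]
  · by_cases hy : y ∈ [1, a, b, ab]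
    · exact alpha_of_mem x hx y hy z t
    · calc x * z * y * t * x * y = x * z * (y * (t * x) * y) := by simp only [mul_assoc]
        _ = x * z * (y * t * y) * x := by
          simp only [mul_mul_self_eq_zero y hy, mul_zero, zero_mul]
        _ = x * z * y * t * y * x := by simp only [mul_assoc]
  · calc x * z * y * t * x * y = x * (z * y * t) * x * y := by simp only [mul_assoc]
      _ = x * (z * y * t * y) * x := by
        simp only [mul_mul_self_eq_zero x hx, zero_mul]
      _ = x * z * y * t * y * x := by simp only [mul_assoc]

theorem beta (x z y t : Syn) : x * z * x * y * t * y = x * z * y * x * t * y := by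
  by_cases hx : x ∈ [1, a, b, ab]
  · by_cases hy : y ∈ [1, a, b, ab]
    · exact beta_of_mem x hx y hy z t
    · calc x * z * x * y * t * y = x * z * x * (y * t * y) := by simp only [mul_assoc]
        _ = x * z * (y * (x * t) * y) := by
          simp only [mul_mul_self_eq_zero y hy, mul_zero]
        _ = x * z * y * x * t * y := by simp only [mul_assoc]
  · calc x * z * x * y * t * y = x * z * x * (y * t * y) := by simp only [mul_assoc]
      _ = x * (z * y) * x * (t * y) := by
        simp only [mul_mul_self_eq_zero x hx, zero_mul]
      _ = x * z * y * x * t * y := by simp only [mul_assoc]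

theorem sigmaN_le_MSat : RelLe SigmaN (MSat Syn) :=
  _root_.sigmaN_le_MSat pow_two_eq_pow_three pow_two_mul_comm
    mul_mul_mul_mul_self_eq_pow_two_mul_mul alpha beta

end Syn

namespace List

variable {α : Type*}

/-- `insertRuns y [a₁, …, aₙ] k = y^(k 0) a₁ y^(k 1) a₂ ⋯ aₙ y^(k n)`. -/
def insertRuns (y : α) : List α → (ℕ → ℕ) → List α
  | [], k => replicate (k 0) y
  | a :: l, k => replicate (k 0) y ++ a :: insertRuns y l (fun i => k (i + 1))

theorem cons_insertRuns (y : α) (l : List α) (k : ℕ → ℕ) :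
    y :: insertRuns y l k = insertRuns y l (fun i => if i = 0 then k 0 + 1 else k i) := by
  cases l <;> simp [insertRuns, replicate_succ]

theorem exists_eq_insertRuns [DecidableEq α] (y : α) (S : List α) (hy : y ∉ S) :
    ∀ v : List α, (∀ a ∈ v, a ∈ S ∨ a = y) → ∃ k, v = insertRuns y (v.filter (· ∈ S)) k
  | [], _ => ⟨fun _ => 0, rfl⟩
  | a :: v, h => by
    obtain ⟨k, hk⟩ := exists_eq_insertRuns y S hy v fun b hb => h b (mem_cons_of_mem _ hb)
    rcases h a mem_cons_self with ha | rfl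
    · refine ⟨fun i => if i = 0 then 0 else k (i - 1), ?_⟩
      simpa [filter_cons, ha, insertRuns] using hk
    · exact ⟨_, by rw [filter_cons_of_neg (by simpa using hy), ← cons_insertRuns, ← hk]⟩

theorem replicate_append_replicate_append (a : α) (m n : ℕ) (l : List α) :
    replicate m a ++ (replicate n a ++ l) = replicate (m + n) a ++ l := by
  rw [← append_assoc, replicate_append_replicate]

theorem replicate_append_cons_inj {a b : α} (hb : b ≠ a) {m n : ℕ} {l l' : List α} :
    replicate m a ++ b :: l = replicate n a ++ b :: l' ↔ m = n ∧ l = l' := by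
  induction m generalizing n with
  | zero => cases n <;> simp [replicate_succ, hb]
  | succ m ih => cases n <;> simp [replicate_succ, hb.symm, ih]

end List

theorem exists_toList_eq_insertRuns_of_thFM {v : Word}
    (h : ThFM [0, 2, 0, 1, 3, 1] (wx * wy * ws * wx * wz * wy * wt * wz) v) :
    ∃ k, v.toList = List.insertRuns 1 [0, 4, 0, 2, 3, 2] k := by
  have hu : (wx * wy * ws * wx * wz * wy * wt * wz).toList = [0, 1, 4, 0, 2, 1, 3, 2] := rfl
  have hv : ∀ a ∈ v.toList, a ∈ [0, 2, 3, 4] ∨ a = 1 := by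
    intro a ha
    by_contra hne
    have hnil : (wx * wy * ws * wx * wz * wy * wt * wz).toList.filter (· ∈ [a]) = [] :=
      List.filter_eq_nil_iff.2 (by simp only [not_or, List.mem_cons] at hne; simp [hu]; omega)
    have := h.filter_eq [a] id (by simp) (by rw [hnil]; exact List.nil_infix)
    rw [hnil, eq_comm, List.filter_eq_nil_iff] at this
    exact this a ha (by simp)
  -- the projection `xsxztz` to `x, z, t, s` is renamed to `xzxyty`
  have hA : [0, 4, 0, 2, 3, 2] = v.toList.filter (· ∈ [0, 2, 3, 4]) := h.filter_eq [0, 2, 3, 4]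
    (fun n => if n = 2 then 1 else if n = 4 then 2 else n) (by decide) (by decide)
  obtain ⟨k, hk⟩ := List.exists_eq_insertRuns 1 [0, 2, 3, 4] (by decide) v.toList hv
  exact ⟨k, by rwa [← hA] at hk⟩

theorem eq_or_eq_of_thFM {v : Word}
    (h : ThFM [0, 2, 0, 1, 3, 1] (wx * wy * ws * wx * wz * wy * wt * wz) v) :
    v = wx * wy * ws * wx * wz * wy * wt * wz ∨ v = wy * wx * ws * wx * wz * wy * wt * wz := by
  obtain ⟨k, hk⟩ := exists_toList_eq_insertRuns_of_thFM h
  -- the projection `ysyt` to `y, t, s` is renamed to `xzxy`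
  have hB : [1, 4, 1, 3] = v.toList.filter (· ∈ [1, 3, 4]) := h.filter_eq [1, 3, 4]
    (fun n => if n = 1 then 0 else if n = 3 then 1 else if n = 4 then 2 else n)
    (by decide) (by decide)
  have hyst : v.toList.filter (· ∈ [1, 3, 4]) = List.replicate (k 0 + k 1) 1 ++
      4 :: (List.replicate (k 2 + k 3 + k 4) 1 ++ 3 :: List.replicate (k 5 + k 6) 1) := by
    simp [hk, List.insertRuns, List.replicate_append_replicate_append, add_assoc]
  rw [hyst,
    show [1, 4, 1, 3] = List.replicate 1 1 ++ 4 :: (List.replicate 1 1 ++ 3 :: []) from rfl,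
    List.replicate_append_cons_inj (by decide), List.replicate_append_cons_inj (by decide),
    eq_comm (a := []), List.replicate_eq_nil_iff] at hB
  obtain ⟨h01, h234, h56⟩ := hB
  -- otherwise the projection to `y, z, t, s` would be `ysyztz`, renamed to `xzxyty`
  have hk4 : k 4 = 1 := by
    by_contra hk4
    have hC : v.toList.filter (· ∈ [1, 2, 3, 4]) = [1, 4, 1, 2, 3, 2] := by
      simp [hk, List.insertRuns, List.replicate_append_replicate_append, ← h01,
        show k 2 + k 3 = 1 by omega, show k 4 = 0 by omega, show k 5 = 0 by omega,
        show k 6 = 0 by omega]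
    exact absurd (h.symm.filter_eq [1, 2, 3, 4]
      (fun n => if n = 1 then 0 else if n = 2 then 1 else if n = 4 then 2 else n)
      (by decide) (by rw [hC]; decide)) (by rw [hC]; decide)
  have hv :
      v.toList = List.replicate (k 0) 1 ++ 0 :: List.replicate (k 1) 1 ++ [4, 0, 2, 1, 3, 2] := by
    simp [hk, List.insertRuns, show k 2 = 0 by omega, show k 3 = 0 by omega, hk4,
      show k 5 = 0 by omega, show k 6 = 0 by omega]
  obtain ⟨h0, h1⟩ | ⟨h0, h1⟩ : k 0 = 0 ∧ k 1 = 1 ∨ k 0 = 1 ∧ k 1 = 0 := by omega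
  · exact Or.inl (FreeMonoid.toList.injective (by rw [hv, h0, h1]; rfl))
  · exact Or.inr (FreeMonoid.toList.injective (by rw [hv, h0, h1]; rfl))

theorem not_thetaN_yxsxzytz :
    ¬ thetaN (wx * wy * ws * wx * wz * wy * wt * wz) (wy * wx * ws * wx * wz * wy * wt * wz) := by
  intro h
  -- `x, y, s ↦ a, b, c` and `z, t ↦ 1` sends the two words to `abcab ≠ 0 = bacab`
  have := MSat.of_thetaN Syn.sigmaN_le_MSat h
    (FreeMonoid.lift fun n => if n = 0 then .a else if n = 1 then .b else if n = 4 then .c else 1)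
  exact absurd this (by decide)

/-- The word `xysxzytz` is an isoterm for the join of the variety
generated by the factor monoid `M(xzxyty)` and the variety `N`: any word `v` such that
the identity `xysxzytz ≈ v` holds both in `M(xzxyty)` and throughout `N` equals
`xysxzytz`. -/
theorem statement_19 (v : Word)
    (h : RelMeet (ThFM [0, 2, 0, 1, 3, 1]) thetaN
      (wx * wy * ws * wx * wz * wy * wt * wz) v) :
    v = wx * wy * ws * wx * wz * wy * wt * wz := by
  obtain ⟨hM, hN⟩ := h
  rcases eq_or_eq_of_thFM hM with rfl | rfl
  · rfl
  · exact absurd hN not_thetaN_yxsxzytz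
end
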